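/- arXiv:2605.07484 — 13 statements merged into one kernel-verified Lean document; each statement's English description precedes it below -/
import Mathlib

section
/- With D_i = ∏_{k=0}^{i−1} f^{(k)}(θ^{q^i}) (and D_0 = 1), for every i ≥ 0 the closed formula D_i = (θ − η)^{−W_i} · (∏_{k=0}^{N−1} (θ − η^{q^k})^{−q^i·⌊(i+k)/N⌋}) · ∏_{l=0}^{i−1} (θ^{q^l} − θ^{q^i}) holds in F. -/
/-- Closed formula for the exponential coefficients:
`D i = (θ-η)^{-W_i} · ∏_{k<N} (θ-η^{q^k})^{-q^i·⌊(i+k)/N⌋} · ∏_{l<i} (θ^{q^l} - θ^{q^i})`. -/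
theorem drinfeld_exp_coeff_closed_formula
    (p q N : ℕ) (hp : Nat.Prime p) (hq : ∃ e : ℕ, 0 < e ∧ q = p ^ e)
    (hN : 2 ≤ N)
    (F : Type*) [Field F] [CharP F p]
    (θ η : F) (hη : η ≠ 0) (hper : η ^ q ^ N = η)
    (hθη : ∀ a b : ℕ, θ ^ q ^ a ≠ η ^ q ^ b)
    (hθ : ∀ m : ℕ, 1 ≤ m → θ ^ q ^ m ≠ θ)
    (W : ℕ → ℕ) (hW : ∀ i, W i = (q ^ i - 1) / (q - 1))
    (D : ℕ → F)
    (hD : ∀ i : ℕ, D i = ∏ k ∈ Finset.range i,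
      ((θ ^ q ^ i - η ^ q ^ k)⁻¹ - (θ ^ q ^ k - η ^ q ^ k)⁻¹)) :
    ∀ i : ℕ,
      D i = ((θ - η) ^ W i)⁻¹
        * (∏ k ∈ Finset.range N, ((θ - η ^ q ^ k) ^ (q ^ i * ((i + k) / N)))⁻¹)
        * ∏ l ∈ Finset.range i, (θ ^ q ^ l - θ ^ q ^ i) := by
  haveI : Fact p.Prime := ⟨hp⟩
  obtain ⟨e, he, hqe⟩ := hq
  have hq2 : 2 ≤ q := hqe ▸ le_trans hp.two_le (Nat.le_self_pow he.ne' p)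
  have hN0 : 0 < N := by omega
  -- Frobenius
  have frob : ∀ (a b : F) (m : ℕ), (a - b) ^ q ^ m = a ^ q ^ m - b ^ q ^ m := by
    intro a b m
    have hq' : q ^ m = p ^ (e * m) := by rw [hqe, ← pow_mul]
    rw [hq']
    exact sub_pow_char_pow a b (e * m)
  have frob1 : ∀ a b : F, (a - b) ^ q = a ^ q - b ^ q := by
    intro a b; simpa using frob a b 1
  have powpow : ∀ (x : F) (a b : ℕ), (x ^ q ^ a) ^ q ^ b = x ^ q ^ (a + b) := by
    intro x a b; rw [← pow_mul, ← pow_add]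
  have powpow1 : ∀ (x : F) (a : ℕ), (x ^ q ^ a) ^ q = x ^ q ^ (a + 1) := by
    intro x a; rw [← pow_mul, ← pow_succ]
  -- periodicity of η
  have ηper : ∀ c : ℕ, η ^ q ^ (N * c) = η := by
    intro c
    induction c with
    | zero => simp
    | succ c ih =>
        have h : N * (c + 1) = N * c + N := by ring
        rw [h, pow_add, pow_mul, ih, hper]
  have ηmod : ∀ m : ℕ, N ∣ m → η ^ q ^ m = η := by
    rintro m ⟨c, rfl⟩; exact ηper c
  -- nonvanishing
  have hne1 : ∀ a b : ℕ, θ ^ q ^ a - η ^ q ^ b ≠ 0 := fun a b => sub_ne_zero.mpr (hθη a b)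
  have hθη0 : θ - η ≠ 0 := by simpa using hne1 0 0
  -- W facts
  have hWsum : ∀ i, W i = ∑ k ∈ Finset.range i, q ^ k := by
    intro i; rw [hW, ← Nat.geomSum_eq hq2]
  have hW0 : W 0 = 0 := by rw [hWsum]; simp
  have hWrec : ∀ i, W (i + 1) = q * W i + 1 := by
    intro i
    rw [hWsum, hWsum, Finset.sum_range_succ']
    simp only [pow_succ, pow_zero]
    rw [← Finset.sum_mul, mul_comm]
  intro i
  induction i with
  | zero =>
      rw [hD 0, hW0]
      simp only [Finset.prod_range_zero, pow_zero, inv_one, one_mul, mul_one]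
      refine (Finset.prod_eq_one fun k hk => ?_).symm
      have h0 : (0 + k) / N = 0 := Nat.div_eq_of_lt (by simpa using Finset.mem_range.mp hk)
      rw [h0]
      simp
  | succ i ih =>
      -- recursion for D
      have hgD : D (i + 1) = ((θ ^ q ^ (i + 1) - η)⁻¹ - (θ - η)⁻¹) * D i ^ q := by
        rw [hD (i + 1), hD i, Finset.prod_range_succ', mul_comm]
        congr 1
        · simp
        · rw [← Finset.prod_pow]
          refine Finset.prod_congr rfl fun k _ => ?_
          rw [frob1, inv_pow, inv_pow, frob1, frob1, powpow1 θ i, powpow1 η k, powpow1 θ k]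
      -- the special index k₀
      set k₀ : ℕ := (N - (i + 1) % N) % N with hk₀
      have hk0lt : k₀ < N := Nat.mod_lt _ hN0
      have hr : (i + 1) % N < N := Nat.mod_lt _ hN0
      have hdvd : N ∣ i + 1 + k₀ := by
        rcases Nat.eq_zero_or_pos ((i + 1) % N) with h | h
        · have hz : k₀ = 0 := by rw [hk₀, h, Nat.sub_zero, Nat.mod_self]
          rw [hz, Nat.add_zero]
          exact Nat.dvd_of_mod_eq_zero h
        · have hk0' : k₀ = N - (i + 1) % N := Nat.mod_eq_of_lt (by omega)
          refine ⟨(i + 1) / N + 1, ?_⟩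
          have h1 := Nat.div_add_mod (i + 1) N
          have h2 : N * ((i + 1) / N + 1) = N * ((i + 1) / N) + N := by ring
          rw [hk0', h2]
          omega
      have huniq : ∀ k, k < N → N ∣ i + 1 + k → k = k₀ := by
        intro k hk hdk
        have d1 : N ∣ i + 1 + k₀ - (i + 1 + k) := Nat.dvd_sub hdvd hdk
        have d2 : N ∣ i + 1 + k - (i + 1 + k₀) := Nat.dvd_sub hdk hdvd
        have e1 : i + 1 + k₀ - (i + 1 + k) = k₀ - k := by omega
        have e2 : i + 1 + k - (i + 1 + k₀) = k - k₀ := by omega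
        rw [e1] at d1; rw [e2] at d2
        have z1 : k₀ - k = 0 := Nat.eq_zero_of_dvd_of_lt d1 (by omega)
        have z2 : k - k₀ = 0 := Nat.eq_zero_of_dvd_of_lt d2 (by omega)
        omega
      have hη0 : η ^ q ^ (k₀ + (i + 1)) = η := by
        apply ηmod
        rwa [Nat.add_comm] at hdvd
      -- the middle product recursion
      have hB : (∏ k ∈ Finset.range N, ((θ - η ^ q ^ k) ^ (q ^ (i + 1) * ((i + 1 + k) / N)))⁻¹)
          = (∏ k ∈ Finset.range N, ((θ - η ^ q ^ k) ^ (q ^ i * ((i + k) / N)))⁻¹) ^ q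
            * (θ ^ q ^ (i + 1) - η)⁻¹ := by
        have step : ∀ k ∈ Finset.range N,
            ((θ - η ^ q ^ k) ^ (q ^ (i + 1) * ((i + 1 + k) / N)))⁻¹
              = (((θ - η ^ q ^ k) ^ (q ^ i * ((i + k) / N)))⁻¹) ^ q
                * (if k = k₀ then (θ ^ q ^ (i + 1) - η)⁻¹ else 1) := by
          intro k hk
          have hsucc : (i + 1 + k) / N = (i + k) / N + if N ∣ i + k + 1 then 1 else 0 := by
            rw [show i + 1 + k = i + k + 1 by omega, Nat.succ_div]
          by_cases hd : N ∣ i + 1 + k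
          · have hkk : k = k₀ := huniq k (Finset.mem_range.mp hk) hd
            have hd' : N ∣ i + k + 1 := by rwa [show i + k + 1 = i + 1 + k by omega]
            rw [hsucc, if_pos hd', if_pos hkk]
            have hc : (θ - η ^ q ^ k) ^ q ^ (i + 1) = θ ^ q ^ (i + 1) - η := by
              rw [hkk, frob, powpow, hη0]
            rw [← hc]
            simp only [← inv_pow]
            rw [← pow_mul ((θ - η ^ q ^ k)⁻¹) (q ^ i * ((i + k) / N)) q,
              ← pow_add ((θ - η ^ q ^ k)⁻¹) (q ^ i * ((i + k) / N) * q) (q ^ (i + 1))]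
            congr 1
            ring
          · have hkk : ¬ k = k₀ := fun h => hd (h ▸ hdvd)
            have hd' : ¬ N ∣ i + k + 1 := by
              rwa [show i + k + 1 = i + 1 + k by omega]
            rw [hsucc, if_neg hd', if_neg hkk, Nat.add_zero, mul_one]
            simp only [← inv_pow]
            rw [← pow_mul ((θ - η ^ q ^ k)⁻¹) (q ^ i * ((i + k) / N)) q]
            congr 1
            ring
        calc (∏ k ∈ Finset.range N, ((θ - η ^ q ^ k) ^ (q ^ (i + 1) * ((i + 1 + k) / N)))⁻¹)
            = ∏ k ∈ Finset.range N,
              ((((θ - η ^ q ^ k) ^ (q ^ i * ((i + k) / N)))⁻¹) ^ q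
                * (if k = k₀ then (θ ^ q ^ (i + 1) - η)⁻¹ else 1)) :=
              Finset.prod_congr rfl step
          _ = (∏ k ∈ Finset.range N, (((θ - η ^ q ^ k) ^ (q ^ i * ((i + k) / N)))⁻¹) ^ q)
                * ∏ k ∈ Finset.range N, (if k = k₀ then (θ ^ q ^ (i + 1) - η)⁻¹ else 1) :=
              Finset.prod_mul_distrib
          _ = _ := by
              rw [Finset.prod_pow, Finset.prod_ite_eq' (Finset.range N) k₀,
                if_pos (Finset.mem_range.mpr hk0lt)]
      -- the last product recursion
      have hC : (∏ l ∈ Finset.range (i + 1), (θ ^ q ^ l - θ ^ q ^ (i + 1)))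
          = (θ - θ ^ q ^ (i + 1)) * (∏ l ∈ Finset.range i, (θ ^ q ^ l - θ ^ q ^ i)) ^ q := by
        rw [Finset.prod_range_succ', mul_comm]
        congr 1
        · simp
        · rw [← Finset.prod_pow]
          refine Finset.prod_congr rfl fun l _ => ?_
          rw [frob1, powpow1 θ l, powpow1 θ i]
      have h1 : θ ^ q ^ (i + 1) - η ≠ 0 := by simpa using hne1 (i + 1) 0
      have hg : (θ ^ q ^ (i + 1) - η)⁻¹ - (θ - η)⁻¹
          = (θ - η)⁻¹ * (θ ^ q ^ (i + 1) - η)⁻¹ * (θ - θ ^ q ^ (i + 1)) := by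
        rw [inv_sub_inv h1 hθη0, div_eq_mul_inv, mul_inv,
          show θ - η - (θ ^ q ^ (i + 1) - η) = θ - θ ^ q ^ (i + 1) from by ring]
        ring
      have hX : ((θ - η) ^ (q * W i + 1))⁻¹ = (((θ - η) ^ W i)⁻¹) ^ q * (θ - η)⁻¹ := by
        rw [pow_add, pow_one, mul_comm q (W i), pow_mul, mul_inv, inv_pow]
      rw [hgD, ih, hWrec i, hB, hC, hX, hg, mul_pow, mul_pow]
      ring
end

section
/- For every integer j ≥ 0, set h^{(j+1)}(t) = −((θ^{q^j} − η^{q^{j−1}})/(θ^{q^j} − η^{q^j})) · ((t − η^{q^{j−1}})(t − η^{q^j}))^{−1} ∈ F(t). Then the rational function (t − θ) · h^{(j+1)}(t) / (f^{(0)}(t) f^{(1)}(t) ⋯ f^{(j)}(t)) has no pole at t = θ, and its value at t = θ equals (−1)^j / L_j. (Since f^{(0)} has a simple zero at t = θ, this says that the residue at t = θ of the differential ω^{(j+1)}/(f^{(0)}⋯f^{(j)}), with ω^{(j+1)} = h^{(j+1)}(t) dt, equals (−1)^j/L_j, i.e. the residue formula for the logarithm coefficients.) -/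
open Polynomial Finset

/-- Evaluation of a rational function given a representation `P/Q` with `Q θ ≠ 0`. -/
lemma ratfunc_eval_of_rep {F : Type*} [Field F] (θ : F) (P Q : Polynomial F)
    (hQ : Q.eval θ ≠ 0) {x : RatFunc F}
    (hx : x = algebraMap (Polynomial F) (RatFunc F) P / algebraMap (Polynomial F) (RatFunc F) Q) :
    (Polynomial.eval θ x.denom ≠ 0)
      ∧ RatFunc.eval (RingHom.id F) θ x = P.eval θ / Q.eval θ := by
  have hQ0 : Q ≠ 0 := fun hq => hQ (by simp [hq])
  have hdvd : x.denom ∣ Q := (RatFunc.denom_dvd hQ0).2 ⟨P, hx⟩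
  obtain ⟨R, hR⟩ := hdvd
  have hden : Polynomial.eval θ x.denom ≠ 0 := by
    intro h0
    apply hQ
    rw [hR, Polynomial.eval_mul, h0, zero_mul]
  refine ⟨hden, ?_⟩
  have h1 : algebraMap (Polynomial F) (RatFunc F) x.num / algebraMap (Polynomial F) (RatFunc F) x.denom
      = algebraMap (Polynomial F) (RatFunc F) P / algebraMap (Polynomial F) (RatFunc F) Q := by
    rw [RatFunc.num_div_denom, hx]
  rw [div_eq_div_iff (RatFunc.algebraMap_ne_zero (x.denom_ne_zero))
    (RatFunc.algebraMap_ne_zero hQ0), ← map_mul, ← map_mul] at h1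
  have h2 : x.num * Q = P * x.denom := RatFunc.algebraMap_injective F h1
  have h3 : x.num.eval θ * Q.eval θ = P.eval θ * x.denom.eval θ := by
    rw [← Polynomial.eval_mul, ← Polynomial.eval_mul, h2]
  have heval : RatFunc.eval (RingHom.id F) θ x = x.num.eval θ / x.denom.eval θ := rfl
  rw [heval, div_eq_div_iff hden hQ]
  linear_combination h3

lemma nat_exp_step (N j k : ℕ) (hN : 2 ≤ N) (hj : 1 ≤ j) (hk : k < N) :
    (j + 1 + N - k - 2) / N = (j + N - k - 2) / N + (if k = (j - 1) % N then 1 else 0) := by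
  set d := j + N - k - 2 with hd
  have hd1 : j + 1 + N - k - 2 = d + 1 := by omega
  rw [hd1]
  have hN0 : 0 < N := by omega
  set a := d / N with ha
  set s := d % N with hs
  have h1 : N * a + s = d := by rw [ha, hs]; exact Nat.div_add_mod d N
  have hsN : s < N := Nat.mod_lt _ hN0
  -- compute (d+1)/N
  have h2 : d + 1 = N * a + (s + 1) := by omega
  have h3 : (d + 1) / N = a + (s + 1) / N := by rw [h2, Nat.mul_add_div hN0]
  -- indicator equivalence
  set b := (j - 1) / N with hb
  set r := (j - 1) % N with hr
  have h4 : N * b + r = j - 1 := by rw [hb, hr]; exact Nat.div_add_mod (j-1) N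
  have hrN : r < N := Nat.mod_lt _ hN0
  set v := r + (N - 1 - k) with hv
  have h5 : d = v + b * N := by rw [Nat.mul_comm] at h4; omega
  have h6 : s = v % N := by rw [hs, h5, Nat.add_mul_mod_self_right]
  have h7 : v % N = if v < N then v else v - N := by
    split
    · exact Nat.mod_eq_of_lt (by omega)
    · rw [Nat.mod_eq_sub_mod (by omega), Nat.mod_eq_of_lt (by omega)]
  have hiff : k = r ↔ s = N - 1 := by
    rw [h6, h7]; split <;> omega
  by_cases hkr : k = r
  · have hs1 : s = N - 1 := hiff.1 hkr
    rw [if_pos hkr, h3, hs1]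
    have : (N - 1 + 1) / N = 1 := by
      have : N - 1 + 1 = N := by omega
      rw [this, Nat.div_self hN0]
    omega
  · have hs1 : s ≠ N - 1 := fun hc => hkr (hiff.2 hc)
    rw [if_neg hkr, h3, Nat.div_eq_of_lt (by omega)]

lemma nat_geom_sum (q : ℕ) (hq : 2 ≤ q) (j : ℕ) :
    ∑ k ∈ Finset.range j, q ^ k = (q ^ j - 1) / (q - 1) := by
  have hInt : ((q : ℤ) - 1) * ∑ k ∈ Finset.range j, (q : ℤ) ^ k = (q : ℤ) ^ j - 1 := by
    rw [mul_comm]; exact geom_sum_mul _ _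
  have hcast : ((∑ k ∈ Finset.range j, q ^ k : ℕ) : ℤ) = ∑ k ∈ Finset.range j, (q : ℤ) ^ k := by
    push_cast; ring
  have h1 : 1 ≤ q ^ j := Nat.one_le_pow _ _ (by omega)
  have hmul : (q - 1) * ∑ k ∈ Finset.range j, q ^ k = q ^ j - 1 := by
    have : (((q - 1) * ∑ k ∈ Finset.range j, q ^ k : ℕ) : ℤ) = ((q ^ j - 1 : ℕ) : ℤ) := by
      push_cast [Nat.cast_sub (by omega : 1 ≤ q), Nat.cast_sub h1]
      rw [hInt]
    exact_mod_cast this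
  rw [← hmul, Nat.mul_div_cancel_left _ (by omega : 0 < q - 1)]

lemma prod_periodic_identity {F : Type*} [CommRing F] (N : ℕ) (hN : 2 ≤ N) (u : ℕ → F)
    (hu : ∀ k, u (k + N) = u k) :
    ∀ j : ℕ, 1 ≤ j →
      ∏ k ∈ Finset.range (j + 1), u k
        = u ((j - 1) % N) * u (j % N)
          * ∏ k ∈ Finset.range N, u k ^ ((j + N - k - 2) / N) := by
  have hN0 : 0 < N := by omega
  have hmod : ∀ k, u k = u (k % N) := by
    intro k
    induction k using Nat.strong_induction_on with
    | _ k ih =>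
      by_cases hk : k < N
      · rw [Nat.mod_eq_of_lt hk]
      · have h1 : k - N + N = k := by omega
        have h2 : (k - N) % N = k % N := by
          conv_rhs => rw [← h1]
          rw [Nat.add_mod_right]
        calc u k = u (k - N + N) := by rw [h1]
          _ = u (k - N) := hu _
          _ = u ((k - N) % N) := ih _ (by omega)
          _ = u (k % N) := by rw [h2]
  intro j hj
  induction j with
  | zero => omega
  | succ j ih =>
    by_cases hj1 : j = 0
    · subst hj1
      have hz : ∀ k ∈ Finset.range N, u k ^ ((1 + N - k - 2) / N) = 1 := by
        intro k hk
        rw [Finset.mem_range] at hk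
        rw [Nat.div_eq_of_lt (by omega), pow_zero]
      rw [Finset.prod_congr rfl hz, Finset.prod_const_one, mul_one]
      rw [Nat.mod_eq_of_lt (by omega : 0 < N), Nat.mod_eq_of_lt (by omega : 1 < N)]
      simp [Finset.prod_range_succ]
    · have hj' : 1 ≤ j := by omega
      rw [Finset.prod_range_succ, ih hj']
      have hexp : ∀ k ∈ Finset.range N,
          u k ^ ((j + 1 + N - k - 2) / N)
            = u k ^ ((j + N - k - 2) / N) * (if k = (j - 1) % N then u k else 1) := by
        intro k hk
        rw [Finset.mem_range] at hk
        rw [nat_exp_step N j k hN hj' hk, pow_add]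
        congr 1
        split <;> simp
      rw [Finset.prod_congr rfl hexp, Finset.prod_mul_distrib]
      rw [Finset.prod_ite_eq' (Finset.range N) ((j - 1) % N) u,
        if_pos (Finset.mem_range.mpr (Nat.mod_lt _ hN0))]
      have h1 : u (j + 1) = u ((j + 1) % N) := hmod _
      have h2 : u ((j + 1 - 1) % N) = u (j % N) := by norm_num
      rw [h2, h1]
      ring


set_option maxHeartbeats 1000000 in
/-- The rational function `(t - θ)·h^{(j+1)}(t)/(f^{(0)}⋯f^{(j)})(t)`
has no pole at `t = θ`, and its value at `t = θ` equals `(-1)^j / L_j`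
(the residue formula for the logarithm coefficients). -/
theorem drinfeld_log_coeff_residue_formula
    (p q N : ℕ) (hp : Nat.Prime p) (hq : ∃ e : ℕ, 0 < e ∧ q = p ^ e)
    (hN : 2 ≤ N)
    (F : Type*) [Field F] [CharP F p]
    (θ η : F) (hη : η ≠ 0) (hper : η ^ q ^ N = η)
    (hθη : ∀ a b : ℕ, θ ^ q ^ a ≠ η ^ q ^ b)
    (hθ : ∀ m : ℕ, 1 ≤ m → θ ^ q ^ m ≠ θ)
    (W : ℕ → ℕ) (hW : ∀ i, W i = (q ^ i - 1) / (q - 1))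
    -- the η-powers with possibly negative exponent index, via η^{q^N} = η
    (ηe : ℤ → F) (hηe : ∀ c : ℤ, ηe c = η ^ q ^ ((c % (N : ℤ)).toNat))
    (L : ℕ → F) (hL0 : L 0 = 1)
    (hL : ∀ j : ℕ, 1 ≤ j → L j
      = (∏ m ∈ Finset.Icc 1 j, (θ - θ ^ q ^ m))
        * ((θ - η) ^ W j)⁻¹
        * ((θ - η ^ q ^ (N - 1)) ^ q ^ j)⁻¹
        * ∏ k ∈ Finset.range N, ((θ - η ^ q ^ k) ^ ((j + N - k - 2) / N))⁻¹)
    -- the twisted shtuka functions f^{(k)} in F(t)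
    (f : ℕ → RatFunc F)
    (hf : ∀ k : ℕ, f k = (RatFunc.X - RatFunc.C (η ^ q ^ k))⁻¹
        - RatFunc.C ((θ ^ q ^ k - η ^ q ^ k)⁻¹))
    -- the functions h^{(j+1)}
    (h : ℕ → RatFunc F)
    (hh : ∀ j : ℕ, h (j + 1)
      = - RatFunc.C ((θ ^ q ^ j - ηe ((j : ℤ) - 1)) / (θ ^ q ^ j - η ^ q ^ j))
        * ((RatFunc.X - RatFunc.C (ηe ((j : ℤ) - 1)))
            * (RatFunc.X - RatFunc.C (η ^ q ^ j)))⁻¹) :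
    ∀ j : ℕ,
      Polynomial.eval θ
        (((RatFunc.X - RatFunc.C θ) * h (j + 1)
          / ∏ k ∈ Finset.range (j + 1), f k).denom) ≠ 0
      ∧ RatFunc.eval (RingHom.id F) θ
          ((RatFunc.X - RatFunc.C θ) * h (j + 1)
            / ∏ k ∈ Finset.range (j + 1), f k)
        = (-1 : F) ^ j / L j := by
  obtain ⟨e₀, he₀, hqe⟩ := hq
  haveI : Fact (Nat.Prime p) := ⟨hp⟩
  have hq2 : 2 ≤ q := by
    rw [hqe]
    calc 2 ≤ p := hp.two_le
      _ ≤ p ^ e₀ := Nat.le_self_pow (by omega) p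
  have frob : ∀ (x y : F) (k : ℕ), (x - y) ^ q ^ k = x ^ q ^ k - y ^ q ^ k := by
    intro x y k
    rw [hqe, ← pow_mul]
    exact sub_pow_char_pow x y (e₀ * k)
  have hηp : ∀ k, η ^ q ^ (k + N) = η ^ q ^ k := by
    intro k
    have h1 : q ^ (k + N) = q ^ N * q ^ k := by rw [pow_add]; ring
    rw [h1, pow_mul, hper]
  have hmodη : ∀ k, η ^ q ^ k = η ^ q ^ (k % N) := by
    intro k
    induction k using Nat.strong_induction_on with
    | _ k ih =>
      by_cases hk : k < N
      · rw [Nat.mod_eq_of_lt hk]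
      · have h1 : k - N + N = k := by omega
        have h2 : (k - N) % N = k % N := by
          conv_rhs => rw [← h1]
          rw [Nat.add_mod_right]
        calc η ^ q ^ k = η ^ q ^ (k - N + N) := by rw [h1]
          _ = η ^ q ^ (k - N) := hηp _
          _ = η ^ q ^ ((k - N) % N) := ih _ (by omega)
          _ = η ^ q ^ (k % N) := by rw [h2]
  have hθη' : ∀ b : ℕ, θ - η ^ q ^ b ≠ 0 := by
    intro b
    have h1 := hθη 0 b
    rw [pow_zero, pow_one] at h1
    exact sub_ne_zero.mpr h1
  have hθη0 : θ - η ≠ 0 := by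
    have h1 := hθη' 0
    rwa [pow_zero, pow_one] at h1
  have hc : ∀ k : ℕ, θ ^ q ^ k - η ^ q ^ k ≠ 0 := fun k => sub_ne_zero.mpr (hθη k k)
  have hDθ : ∀ m : ℕ, 1 ≤ m → θ - θ ^ q ^ m ≠ 0 :=
    fun m hm => sub_ne_zero.mpr (Ne.symm (hθ m hm))
  have hXC : ∀ a : F, RatFunc.X - RatFunc.C a ≠ 0 := by
    intro a
    have h1 : (algebraMap (Polynomial F) (RatFunc F)) (Polynomial.X - Polynomial.C a) ≠ 0 :=
      RatFunc.algebraMap_ne_zero (Polynomial.X_sub_C_ne_zero a)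
    rwa [map_sub, RatFunc.algebraMap_X, RatFunc.algebraMap_C] at h1
  have hCne : ∀ a : F, a ≠ 0 → RatFunc.C a ≠ 0 := by
    intro a ha
    have h1 : (algebraMap (Polynomial F) (RatFunc F)) (Polynomial.C a) ≠ 0 :=
      RatFunc.algebraMap_ne_zero (by simpa using ha)
    rwa [RatFunc.algebraMap_C] at h1
  intro j
  -- identify e := ηe (j - 1)
  set e : F := ηe ((j : ℤ) - 1) with hedef
  have he : e = η ^ q ^ ((j + N - 1) % N) := by
    rw [hedef, hηe]
    congr 1
    have h1 : ((j:ℤ) - 1 + (N:ℤ) * 1) % (N:ℤ) = ((j:ℤ) - 1) % (N:ℤ) :=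
      Int.add_mul_emod_self_left ((j:ℤ) - 1) (N:ℤ) 1
    have h2 : ((j:ℤ) - 1 + (N:ℤ) * 1) = ((j + N - 1 : ℕ) : ℤ) := by push_cast; omega
    have h3 : ((j + N - 1 : ℕ) : ℤ) % (N:ℤ) = (((j + N - 1) % N : ℕ) : ℤ) := by
      push_cast; ring
    rw [← h1, h2, h3, Int.toNat_natCast]
  -- polynomials P and Q
  set b : F := (θ ^ q ^ j - e) * ∏ k ∈ Finset.range j, (θ ^ q ^ k - η ^ q ^ k) with hbdef
  set P : Polynomial F :=
    Polynomial.C b * ∏ k ∈ Finset.range (j + 1), (Polynomial.X - Polynomial.C (η ^ q ^ k))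
    with hPdef
  set Q : Polynomial F :=
    (Polynomial.X - Polynomial.C e) * (Polynomial.X - Polynomial.C (η ^ q ^ j))
      * ∏ m ∈ Finset.Icc 1 j, (Polynomial.C (θ ^ q ^ m) - Polynomial.X) with hQdef
  -- representation of the rational function as P/Q
  have hf' : ∀ k : ℕ, f k = (RatFunc.C (θ ^ q ^ k) - RatFunc.X)
      / ((RatFunc.X - RatFunc.C (η ^ q ^ k)) * RatFunc.C (θ ^ q ^ k - η ^ q ^ k)) := by
    intro k
    have h1 := hXC (η ^ q ^ k)
    have h2 := hCne _ (hc k)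
    rw [hf k, map_inv₀, eq_div_iff (mul_ne_zero h1 h2)]
    calc ((RatFunc.X - RatFunc.C (η ^ q ^ k))⁻¹ - (RatFunc.C (θ ^ q ^ k - η ^ q ^ k))⁻¹)
          * ((RatFunc.X - RatFunc.C (η ^ q ^ k)) * RatFunc.C (θ ^ q ^ k - η ^ q ^ k))
        = ((RatFunc.X - RatFunc.C (η ^ q ^ k))⁻¹ * (RatFunc.X - RatFunc.C (η ^ q ^ k)))
            * RatFunc.C (θ ^ q ^ k - η ^ q ^ k)
          - ((RatFunc.C (θ ^ q ^ k - η ^ q ^ k))⁻¹ * RatFunc.C (θ ^ q ^ k - η ^ q ^ k))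
            * (RatFunc.X - RatFunc.C (η ^ q ^ k)) := by ring
      _ = RatFunc.C (θ ^ q ^ k - η ^ q ^ k) - (RatFunc.X - RatFunc.C (η ^ q ^ k)) := by
          rw [inv_mul_cancel₀ h1, inv_mul_cancel₀ h2, one_mul, one_mul]
      _ = RatFunc.C (θ ^ q ^ k) - RatFunc.X := by rw [map_sub]; ring
  have hfprod : ∏ k ∈ Finset.range (j + 1), f k
      = (∏ k ∈ Finset.range (j + 1), (RatFunc.C (θ ^ q ^ k) - RatFunc.X))
        / ∏ k ∈ Finset.range (j + 1),
            ((RatFunc.X - RatFunc.C (η ^ q ^ k)) * RatFunc.C (θ ^ q ^ k - η ^ q ^ k)) := by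
    rw [← Finset.prod_div_distrib]
    exact Finset.prod_congr rfl fun k _ => hf' k
  have hh' : h (j + 1) = - (RatFunc.C (θ ^ q ^ j - e) / RatFunc.C (θ ^ q ^ j - η ^ q ^ j))
      * ((RatFunc.X - RatFunc.C e) * (RatFunc.X - RatFunc.C (η ^ q ^ j)))⁻¹ := by
    rw [hh j, map_div₀, ← hedef]
  have hrange : Finset.range (j + 1) = insert 0 (Finset.Icc 1 j) := by
    ext x; simp [Finset.mem_Icc]; omega
  have hAθsplit : ∏ k ∈ Finset.range (j + 1), (RatFunc.C (θ ^ q ^ k) - RatFunc.X)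
      = (RatFunc.C θ - RatFunc.X)
        * ∏ m ∈ Finset.Icc 1 j, (RatFunc.C (θ ^ q ^ m) - RatFunc.X) := by
    rw [hrange, Finset.prod_insert (by simp)]
    norm_num
  have hAθ : (∏ k ∈ Finset.range (j + 1), (RatFunc.C (θ ^ q ^ k) - RatFunc.X)) ≠ 0 :=
    Finset.prod_ne_zero_iff.mpr fun k _ => by
      rw [show RatFunc.C (θ ^ q ^ k) - RatFunc.X = -(RatFunc.X - RatFunc.C (θ ^ q ^ k)) by ring]
      exact neg_ne_zero.mpr (hXC _)
  have hAden : (∏ k ∈ Finset.range (j + 1),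
      ((RatFunc.X - RatFunc.C (η ^ q ^ k)) * RatFunc.C (θ ^ q ^ k - η ^ q ^ k))) ≠ 0 :=
    Finset.prod_ne_zero_iff.mpr fun k _ => mul_ne_zero (hXC _) (hCne _ (hc k))
  have hQne : Q ≠ 0 := by
    rw [hQdef]
    refine mul_ne_zero (mul_ne_zero (Polynomial.X_sub_C_ne_zero e) (Polynomial.X_sub_C_ne_zero _)) ?_
    refine Finset.prod_ne_zero_iff.mpr fun m _ => ?_
    rw [show Polynomial.C (θ ^ q ^ m) - Polynomial.X
      = -(Polynomial.X - Polynomial.C (θ ^ q ^ m)) by ring]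
    exact neg_ne_zero.mpr (Polynomial.X_sub_C_ne_zero _)
  have hPimg : algebraMap (Polynomial F) (RatFunc F) P
      = RatFunc.C b * ∏ k ∈ Finset.range (j + 1), (RatFunc.X - RatFunc.C (η ^ q ^ k)) := by
    rw [hPdef, map_mul, map_prod]
    simp [RatFunc.algebraMap_X, RatFunc.algebraMap_C]
  have hQimg : algebraMap (Polynomial F) (RatFunc F) Q
      = (RatFunc.X - RatFunc.C e) * (RatFunc.X - RatFunc.C (η ^ q ^ j))
        * ∏ m ∈ Finset.Icc 1 j, (RatFunc.C (θ ^ q ^ m) - RatFunc.X) := by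
    rw [hQdef, map_mul, map_mul, map_prod]
    simp [RatFunc.algebraMap_X, RatFunc.algebraMap_C]
  have hCb : RatFunc.C b = RatFunc.C (θ ^ q ^ j - e)
      * ∏ k ∈ Finset.range j, RatFunc.C (θ ^ q ^ k - η ^ q ^ k) := by
    rw [hbdef, map_mul, map_prod]
  have hAdensplit : ∏ k ∈ Finset.range (j + 1),
      ((RatFunc.X - RatFunc.C (η ^ q ^ k)) * RatFunc.C (θ ^ q ^ k - η ^ q ^ k))
      = (∏ k ∈ Finset.range (j + 1), (RatFunc.X - RatFunc.C (η ^ q ^ k)))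
        * ((∏ k ∈ Finset.range j, RatFunc.C (θ ^ q ^ k - η ^ q ^ k))
            * RatFunc.C (θ ^ q ^ j - η ^ q ^ j)) := by
    rw [Finset.prod_mul_distrib,
      Finset.prod_range_succ (fun k => RatFunc.C (θ ^ q ^ k - η ^ q ^ k)) j]
  have hrep : (RatFunc.X - RatFunc.C θ) * h (j + 1) / ∏ k ∈ Finset.range (j + 1), f k
      = algebraMap (Polynomial F) (RatFunc F) P / algebraMap (Polynomial F) (RatFunc F) Q := by
    rw [hfprod, hh', hPimg, hQimg]
    rw [hAθsplit] at hAθ ⊢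
    have h1 := hXC e
    have h2 := hXC (η ^ q ^ j)
    have h3 := hCne _ (hc j)
    have h4 : (RatFunc.C θ - RatFunc.X) ≠ 0 := by
      rw [show RatFunc.C θ - RatFunc.X = -(RatFunc.X - RatFunc.C θ) by ring]
      exact neg_ne_zero.mpr (hXC θ)
    have h5 : (∏ m ∈ Finset.Icc 1 j, (RatFunc.C (θ ^ q ^ m) - RatFunc.X)) ≠ 0 := by
      intro h0; exact hAθ (by rw [h0, mul_zero])
    rw [hAdensplit] at hAden ⊢
    have h6 : (∏ k ∈ Finset.range (j + 1), (RatFunc.X - RatFunc.C (η ^ q ^ k))) ≠ 0 :=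
      Finset.prod_ne_zero_iff.mpr fun k _ => hXC _
    have h7 : (∏ k ∈ Finset.range j, RatFunc.C (θ ^ q ^ k - η ^ q ^ k)) ≠ 0 :=
      Finset.prod_ne_zero_iff.mpr fun k _ => hCne _ (hc k)
    rw [hCb]
    simp only [map_sub, map_pow] at h1 h2 h3 h4 h5 h6 h7 ⊢
    field_simp
    ring
  have hQeval : Q.eval θ ≠ 0 := by
    rw [hQdef]
    simp only [Polynomial.eval_mul, Polynomial.eval_prod, Polynomial.eval_sub,
      Polynomial.eval_X, Polynomial.eval_C]
    refine mul_ne_zero (mul_ne_zero ?_ (hθη' j)) ?_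
    · rw [he]; exact hθη' _
    · refine Finset.prod_ne_zero_iff.mpr fun m hm => ?_
      have hm1 : 1 ≤ m := (Finset.mem_Icc.mp hm).1
      exact sub_ne_zero.mpr (hθ m hm1)
  obtain ⟨hden, heval⟩ := ratfunc_eval_of_rep θ P Q hQeval hrep
  refine ⟨hden, ?_⟩
  rw [heval]
  have hPeval : P.eval θ = b * ∏ k ∈ Finset.range (j + 1), (θ - η ^ q ^ k) := by
    rw [hPdef]
    simp [Polynomial.eval_prod]
  have hQeval' : Q.eval θ = (θ - e) * (θ - η ^ q ^ j) * ∏ m ∈ Finset.Icc 1 j, (θ ^ q ^ m - θ) := by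
    rw [hQdef]
    simp [Polynomial.eval_prod]
  rw [hPeval, hQeval']
  by_cases hj : j = 0
  · subst hj
    rw [hL0, hbdef]
    have hz1 : θ - e ≠ 0 := by rw [he]; exact hθη' _
    have hz2 : θ - η ≠ 0 := hθη0
    simp only [Finset.range_zero, Finset.prod_empty, mul_one, pow_zero, pow_one,
      Finset.Icc_eq_empty (by omega : ¬ (1:ℕ) ≤ 0), Finset.prod_range_one, zero_add]
    field_simp
  · have hj1 : 1 ≤ j := by omega
    rw [hL j hj1, hbdef]
    have hb1 : θ ^ q ^ j - e = (θ - η ^ q ^ (N - 1)) ^ q ^ j := by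
      rw [frob]
      congr 1
      rw [← pow_mul, ← pow_add, hmodη (N - 1 + j), he,
        show N - 1 + j = j + N - 1 from by omega]
    have hb2 : ∏ k ∈ Finset.range j, (θ ^ q ^ k - η ^ q ^ k) = (θ - η) ^ W j := by
      have h1 : ∀ k ∈ Finset.range j, θ ^ q ^ k - η ^ q ^ k = (θ - η) ^ q ^ k :=
        fun k _ => (frob θ η k).symm
      rw [Finset.prod_congr rfl h1, Finset.prod_pow_eq_pow_sum, hW j,
        ← nat_geom_sum q hq2 j]
    have he1 : η ^ q ^ ((j - 1) % N) = e := by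
      rw [he]
      congr 2
      conv_rhs => rw [show j + N - 1 = (j - 1) + N by omega]
      rw [Nat.add_mod_right]
    have hb3 : ∏ k ∈ Finset.range (j + 1), (θ - η ^ q ^ k)
        = (θ - e) * (θ - η ^ q ^ j)
          * ∏ k ∈ Finset.range N, (θ - η ^ q ^ k) ^ ((j + N - k - 2) / N) := by
      rw [prod_periodic_identity N hN (fun k => θ - η ^ q ^ k)
        (fun k => by show θ - η ^ q ^ (k + N) = θ - η ^ q ^ k; rw [hηp k]) j hj1]
      rw [he1, ← hmodη j]
    have hDneg : ∏ m ∈ Finset.Icc 1 j, (θ ^ q ^ m - θ)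
        = (-1 : F) ^ j * ∏ m ∈ Finset.Icc 1 j, (θ - θ ^ q ^ m) := by
      have h1 : ∀ m ∈ Finset.Icc 1 j, θ ^ q ^ m - θ = (-1) * (θ - θ ^ q ^ m) :=
        fun m _ => by ring
      rw [Finset.prod_congr rfl h1, Finset.prod_mul_distrib, Finset.prod_const,
        Nat.card_Icc]
      norm_num
    rw [hb1, hb2, hb3, hDneg, Finset.prod_inv_distrib]
    have hz1 : θ - e ≠ 0 := by rw [he]; exact hθη' _
    have hz2 : (θ - η) ^ W j ≠ 0 := pow_ne_zero _ hθη0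
    have hz3 : (θ - η ^ q ^ (N - 1)) ^ q ^ j ≠ 0 := pow_ne_zero _ (hθη' _)
    have hzM : (∏ k ∈ Finset.range N, (θ - η ^ q ^ k) ^ ((j + N - k - 2) / N)) ≠ 0 :=
      Finset.prod_ne_zero_iff.mpr fun k _ => pow_ne_zero _ (hθη' _)
    have hzD : (∏ m ∈ Finset.Icc 1 j, (θ - θ ^ q ^ m)) ≠ 0 :=
      Finset.prod_ne_zero_iff.mpr fun m hm => hDθ m (Finset.mem_Icc.mp hm).1
    have hz6 : θ - η ^ q ^ j ≠ 0 := hθη' j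
    have hzs : ((-1 : F)) ^ j ≠ 0 := pow_ne_zero _ (by norm_num)
    have hsq : ((-1 : F)) ^ j * ((-1 : F)) ^ j = 1 := by
      rw [← pow_add]
      exact Even.neg_one_pow ⟨j, rfl⟩
    field_simp
    linear_combination (-1 : F) * hsq
end

section
/- For every integer j ≥ 1: (a) L_j = ⟨1⟩⟨2⟩⋯⟨j⟩ · (θ − η)^{q^j} · (θ − η^{q^j}) · (θ − η^{q^{j−1}}) / ( (θ − η^{q^{N−1}})^{q^j} · (θ − η)^2 ); and (b) if L_j^{σ²} denotes the element obtained from the defining formula of L_j by replacing η throughout by η^{q²}, then L_j^{σ²} = ⟨1⟩⟨2⟩⋯⟨j⟩ · ((θ − η)/(θ − η^{q}))^{q^j − 1} · ((θ − η)/(θ − η^{q²}))^{W_j}. -/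
set_option maxHeartbeats 1600000 in
/-- Bracket expressions for `L_j` and its `σ²`-twist:
(a) `L j = ⟨1⟩⋯⟨j⟩ · (θ-η)^{q^j}·(θ-η^{q^j})·(θ-η^{q^{j-1}}) / ((θ-η^{q^{N-1}})^{q^j}·(θ-η)²)`;
(b) `L_j^{σ²} = ⟨1⟩⋯⟨j⟩ · ((θ-η)/(θ-η^q))^{q^j-1} · ((θ-η)/(θ-η^{q²}))^{W_j}`,
where `L_j^{σ²}` is obtained from the defining formula of `L_j` by replacing `η` by `η^{q²}`. -/
theorem drinfeld_log_coeff_bracket_formula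
    (p q N : ℕ) (hp : Nat.Prime p) (hq : ∃ e : ℕ, 0 < e ∧ q = p ^ e)
    (hN : 2 ≤ N)
    (F : Type*) [Field F] [CharP F p]
    (θ η : F) (hη : η ≠ 0) (hper : η ^ q ^ N = η)
    (hθη : ∀ a b : ℕ, θ ^ q ^ a ≠ η ^ q ^ b)
    (hθ : ∀ m : ℕ, 1 ≤ m → θ ^ q ^ m ≠ θ)
    (W : ℕ → ℕ) (hW : ∀ i, W i = (q ^ i - 1) / (q - 1))
    -- the bracket ⟨m⟩ = (θ-η)^{-q^m} - (θ-η^{q^m})^{-1}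
    (br : ℕ → F) (hbr : ∀ m : ℕ, br m = ((θ - η) ^ q ^ m)⁻¹ - (θ - η ^ q ^ m)⁻¹)
    -- the coefficients L_j, parameterized by the element substituted for η
    (Lf : F → ℕ → F) (hLf0 : ∀ e : F, Lf e 0 = 1)
    (hLf : ∀ (e : F) (j : ℕ), 1 ≤ j → Lf e j
      = (∏ m ∈ Finset.Icc 1 j, (θ - θ ^ q ^ m))
        * ((θ - e) ^ W j)⁻¹
        * ((θ - e ^ q ^ (N - 1)) ^ q ^ j)⁻¹
        * ∏ k ∈ Finset.range N, ((θ - e ^ q ^ k) ^ ((j + N - k - 2) / N))⁻¹) :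
    ∀ j : ℕ, 1 ≤ j →
      Lf η j = (∏ m ∈ Finset.Icc 1 j, br m)
          * (θ - η) ^ q ^ j * (θ - η ^ q ^ j) * (θ - η ^ q ^ (j - 1))
          / ((θ - η ^ q ^ (N - 1)) ^ q ^ j * (θ - η) ^ 2)
      ∧ Lf (η ^ q ^ 2) j = (∏ m ∈ Finset.Icc 1 j, br m)
          * ((θ - η) / (θ - η ^ q)) ^ (q ^ j - 1)
          * ((θ - η) / (θ - η ^ q ^ 2)) ^ W j := by
  obtain ⟨ee, hee, hqe⟩ := hq
  haveI : Fact p.Prime := ⟨hp⟩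
  have hq2 : 2 ≤ q := by
    rw [hqe]
    calc 2 ≤ p := hp.two_le
    _ ≤ p ^ ee := Nat.le_self_pow (by omega) p
  have hNpos : 0 < N := by omega
  -- Frobenius
  have hfr : ∀ (a b : F) (m : ℕ), (a - b) ^ q ^ m = a ^ q ^ m - b ^ q ^ m := by
    intro a b m
    rw [hqe, ← pow_mul]
    exact sub_pow_char_pow_of_commute p (ee * m) (Commute.all a b)
  -- nonvanishing
  have hA : ∀ k : ℕ, θ - η ^ q ^ k ≠ 0 := fun k => sub_ne_zero_of_ne (by simpa using hθη 0 k)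
  have hA0 : θ - η ≠ 0 := by simpa using hA 0
  have hA1 : θ - η ^ q ≠ 0 := by have := hA 1; rwa [pow_one] at this
  -- periodicity
  have hper2 : ∀ (s r : ℕ), η ^ q ^ (r + N * s) = η ^ q ^ r := by
    intro s
    induction s with
    | zero => intro r; simp
    | succ s ih =>
      intro r
      have h1 : r + N * (s + 1) = N + (r + N * s) := by ring
      rw [h1, pow_add, pow_mul, hper, ih r]
  have hmod : ∀ a : ℕ, η ^ q ^ a = η ^ q ^ (a % N) := by
    intro a
    conv_lhs => rw [show a = a % N + N * (a / N) from (Nat.mod_add_div a N).symm]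
    exact hper2 _ _
  -- divisibility criterion
  have hmodlem : ∀ (j k : ℕ), 1 ≤ j → k < N → (N ∣ j + N - k - 1 ↔ (j - 1) % N = k) := by
    intro j k hj hk
    have hdm : (j - 1) / N * N + (j - 1) % N = j - 1 := Nat.div_add_mod' (j - 1) N
    have hrlt : (j - 1) % N < N := Nat.mod_lt _ hNpos
    constructor
    · intro hdvd
      have hdvd' : N ∣ (j - 1) % N + N - k := by
        have h1 : (j - 1) / N * N + ((j - 1) % N + N - k) = j + N - k - 1 := by omega
        have h2 : N ∣ (j - 1) / N * N := dvd_mul_left N _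
        exact (Nat.dvd_add_right h2).mp (by rw [h1]; exact hdvd)
      obtain ⟨s, hs⟩ := hdvd'
      have hslt : s < 2 := Nat.lt_of_mul_lt_mul_left (show N * s < N * 2 by omega)
      interval_cases s <;> omega
    · intro h
      refine ⟨(j - 1) / N + 1, ?_⟩
      have hmul : N * ((j - 1) / N + 1) = (j - 1) / N * N + N := by ring
      omega
  -- product step
  have hprodstep : ∀ (x : ℕ → F) (j : ℕ), 1 ≤ j →
      (∏ k ∈ Finset.range N, (x k ^ ((j + 1 + N - k - 2) / N))⁻¹)
        = (x ((j - 1) % N))⁻¹ * ∏ k ∈ Finset.range N, (x k ^ ((j + N - k - 2) / N))⁻¹ := by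
    intro x j hj
    have key : ∀ k ∈ Finset.range N, (x k ^ ((j + 1 + N - k - 2) / N))⁻¹
        = (x k ^ (if k = (j - 1) % N then 1 else 0))⁻¹ * (x k ^ ((j + N - k - 2) / N))⁻¹ := by
      intro k hk
      have hkN : k < N := Finset.mem_range.mp hk
      have h1 : j + 1 + N - k - 2 = (j + N - k - 2) + 1 := by omega
      have h2 : (N ∣ (j + N - k - 2) + 1) ↔ (k = (j - 1) % N) := by
        rw [show (j + N - k - 2) + 1 = j + N - k - 1 from by omega]
        exact (hmodlem j k hj hkN).trans eq_comm
      rw [h1, Nat.succ_div]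
      simp only [h2]
      rw [pow_add, mul_inv]
      exact mul_comm _ _
    rw [Finset.prod_congr rfl key, Finset.prod_mul_distrib]
    congr 1
    rw [Finset.prod_eq_single ((j - 1) % N)
      (fun b _ hb => by simp [hb])
      (fun habs => absurd (Finset.mem_range.mpr (Nat.mod_lt _ hNpos)) habs)]
    simp
  -- W recursion
  have hWs : ∀ j : ℕ, W (j + 1) = W j + q ^ j := by
    intro j
    have h2 : 1 ≤ q ^ j := Nat.one_le_pow _ _ (by omega)
    have key : q ^ (j + 1) - 1 = (q ^ j - 1) + q ^ j * (q - 1) := by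
      have h1 : q ^ (j + 1) = q ^ j * q := pow_succ q j
      have h3 : q ^ j * (q - 1) + q ^ j * 1 = q ^ j * q := by
        rw [← Nat.mul_add]; congr 1; omega
      omega
    rw [hW, hW, key, Nat.add_mul_div_right _ _ (show 0 < q - 1 by omega)]
  have hW1 : W 1 = 1 := by rw [hW, pow_one]; exact Nat.div_self (by omega)
  -- bracket in product form
  have hbr' : ∀ m : ℕ, br m = (θ - θ ^ q ^ m) * ((θ - η) ^ q ^ m)⁻¹ * (θ - η ^ q ^ m)⁻¹ := by
    intro m
    have h1 : (θ - η) ^ q ^ m ≠ 0 := pow_ne_zero _ hA0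
    have h2 : θ - η ^ q ^ m ≠ 0 := hA m
    rw [hbr m]
    field_simp
    rw [hfr θ η m]
    ring
  -- the recursion step for Lf
  have hstep : ∀ (e : F) (j : ℕ), 1 ≤ j → (θ - e ^ q ^ (N - 1)) ^ q ^ j ≠ 0 →
      Lf e (j + 1) = Lf e j * ((θ - θ ^ q ^ (j + 1)) * ((θ - e) ^ q ^ j)⁻¹
        * ((θ - e ^ q ^ (N - 1)) ^ q ^ j) * ((θ - e ^ q ^ (N - 1)) ^ q ^ (j + 1))⁻¹
        * (θ - e ^ q ^ ((j - 1) % N))⁻¹) := by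
    intro e j hj hD
    have hx : ∏ k ∈ Finset.range N, ((θ - e ^ q ^ k) ^ ((j + 1 + N - k - 2) / N))⁻¹
        = (θ - e ^ q ^ ((j - 1) % N))⁻¹
          * ∏ k ∈ Finset.range N, ((θ - e ^ q ^ k) ^ ((j + N - k - 2) / N))⁻¹ :=
      hprodstep (fun k => θ - e ^ q ^ k) j hj
    rw [hLf e (j + 1) (by omega), hLf e j hj,
      Finset.prod_Icc_succ_top (show (1:ℕ) ≤ j + 1 by omega),
      hWs j, pow_add (θ - e) (W j) (q ^ j), hx]
    linear_combination
      (-((∏ m ∈ Finset.Icc 1 j, (θ - θ ^ q ^ m)) * (θ - θ ^ q ^ (j + 1))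
        * ((θ - e) ^ W j)⁻¹ * ((θ - e) ^ q ^ j)⁻¹
        * ((θ - e ^ q ^ (N - 1)) ^ q ^ (j + 1))⁻¹ * (θ - e ^ q ^ ((j - 1) % N))⁻¹
        * (∏ k ∈ Finset.range N, ((θ - e ^ q ^ k) ^ ((j + N - k - 2) / N))⁻¹)))
      * (inv_mul_cancel₀ hD)
  have hsub1 : (η ^ q ^ 2) ^ q ^ (N - 1) = η ^ q ^ 1 := by
    rw [← pow_mul, ← pow_add, show 2 + (N - 1) = 1 + N * 1 from by omega]
    exact hper2 1 1
  intro j hj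
  induction j, hj using Nat.le_induction with
  | base =>
    constructor
    · rw [hLf η 1 le_rfl]
      rw [show ∏ k ∈ Finset.range N, ((θ - η ^ q ^ k) ^ ((1 + N - k - 2) / N))⁻¹ = 1 from
        Finset.prod_eq_one (fun k hk => by
          have := Finset.mem_range.mp hk
          rw [Nat.div_eq_of_lt (by omega), pow_zero, inv_one])]
      simp only [Finset.Icc_self, Finset.prod_singleton]
      rw [hW1, pow_one, hbr' 1]
      simp only [show (1:ℕ) - 1 = 0 from rfl, pow_zero, pow_one]
      have hD : (θ - η ^ q ^ (N - 1)) ^ q ≠ 0 := pow_ne_zero _ (hA _)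
      have h1 : (θ - η) ^ q ≠ 0 := pow_ne_zero _ hA0
      field_simp
    · rw [hLf (η ^ q ^ 2) 1 le_rfl]
      rw [show ∏ k ∈ Finset.range N, ((θ - (η ^ q ^ 2) ^ q ^ k) ^ ((1 + N - k - 2) / N))⁻¹ = 1 from
        Finset.prod_eq_one (fun k hk => by
          have := Finset.mem_range.mp hk
          rw [Nat.div_eq_of_lt (by omega), pow_zero, inv_one])]
      rw [hsub1]
      simp only [Finset.Icc_self, Finset.prod_singleton]
      rw [hW1, hbr' 1]
      simp only [pow_one, mul_one]
      have h1 : θ - η ^ q ^ 2 ≠ 0 := hA 2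
      have hu : (θ - η) / (θ - η ^ q) ≠ 0 := div_ne_zero hA0 hA1
      rw [show ((θ - η) / (θ - η ^ q)) ^ (q - 1)
          = ((θ - η) / (θ - η ^ q)) ^ q / ((θ - η) / (θ - η ^ q)) from by
        rw [pow_sub₀ _ hu (by omega), pow_one]; exact (div_eq_mul_inv _ _).symm]
      have h5 : (θ - η) ^ q ≠ 0 := pow_ne_zero _ hA0
      have h6 : (θ - η ^ q) ^ q ≠ 0 := pow_ne_zero _ hA1
      simp only [div_pow]
      field_simp
  | succ j hj ih =>
    obtain ⟨iha, ihb⟩ := ih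
    have h1q : 1 ≤ q ^ j := Nat.one_le_pow _ _ (by omega)
    constructor
    · have hDa : (θ - η ^ q ^ (N - 1)) ^ q ^ j ≠ 0 := pow_ne_zero _ (hA _)
      have hstepA := hstep η j hj hDa
      rw [← hmod (j - 1)] at hstepA
      rw [hstepA, iha, Finset.prod_Icc_succ_top (show (1:ℕ) ≤ j + 1 by omega), hbr' (j + 1),
        Nat.add_sub_cancel]
      have h2 : θ - η ^ q ^ j ≠ 0 := hA j
      have h3 : θ - η ^ q ^ (j - 1) ≠ 0 := hA (j - 1)
      have h4 : θ - η ^ q ^ (j + 1) ≠ 0 := hA (j + 1)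
      have h5 : (θ - η) ^ q ^ j ≠ 0 := pow_ne_zero _ hA0
      have h6 : (θ - η) ^ q ^ (j + 1) ≠ 0 := pow_ne_zero _ hA0
      have h7 : (θ - η ^ q ^ (N - 1)) ^ q ^ (j + 1) ≠ 0 := pow_ne_zero _ (hA _)
      field_simp
    · have hDb : (θ - (η ^ q ^ 2) ^ q ^ (N - 1)) ^ q ^ j ≠ 0 := by
        rw [hsub1]; exact pow_ne_zero _ (hA 1)
      have hstepB := hstep (η ^ q ^ 2) j hj hDb
      have hsub2 : (η ^ q ^ 2) ^ q ^ ((j - 1) % N) = η ^ q ^ (j + 1) := by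
        have hdm : (j - 1) / N * N + (j - 1) % N = j - 1 := Nat.div_add_mod' (j - 1) N
        have h5 : (j + 1) % N = (2 + (j - 1) % N) % N := by
          rw [show j + 1 = (2 + (j - 1) % N) + (j - 1) / N * N from by omega,
            Nat.add_mul_mod_self_right]
        rw [← pow_mul, ← pow_add, hmod (2 + (j - 1) % N), ← h5, ← hmod (j + 1)]
      rw [hsub1, hsub2] at hstepB
      rw [hstepB, ihb, Finset.prod_Icc_succ_top (show (1:ℕ) ≤ j + 1 by omega), hbr' (j + 1),
        hWs j]
      obtain ⟨d, hd⟩ : ∃ d, q ^ (j + 1) = q ^ j + d := ⟨q ^ (j + 1) - q ^ j, by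
        have hle : q ^ j ≤ q ^ (j + 1) :=
          Nat.pow_le_pow_right (by omega) (by omega)
        omega⟩
      rw [hd, show q ^ j + d - 1 = (q ^ j - 1) + d from by omega]
      simp only [pow_one]
      rw [pow_add θ (q ^ j) d, pow_add η (q ^ j) d, pow_add (θ - η) (q ^ j) d,
        pow_add (θ - η ^ q) (q ^ j) d,
        pow_add ((θ - η) / (θ - η ^ q)) (q ^ j - 1) d,
        pow_add ((θ - η) / (θ - η ^ q ^ 2)) (W j) (q ^ j),
        div_pow (θ - η) (θ - η ^ q) d, div_pow (θ - η) (θ - η ^ q ^ 2) (q ^ j)]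
      have h4 : θ - η ^ q ^ j * η ^ d ≠ 0 := by
        have := hA (j + 1); rwa [hd, pow_add] at this
      have h5 : (θ - η) ^ q ^ j ≠ 0 := pow_ne_zero _ hA0
      have h6 : (θ - η) ^ d ≠ 0 := pow_ne_zero _ hA0
      have h7 : (θ - η ^ q) ^ q ^ j ≠ 0 := pow_ne_zero _ hA1
      have h8 : (θ - η ^ q) ^ d ≠ 0 := pow_ne_zero _ hA1
      have h9 : (θ - η ^ q ^ 2) ^ q ^ j ≠ 0 := pow_ne_zero _ (hA 2)
      generalize (∏ m ∈ Finset.Icc 1 j, br m) = P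
      generalize (θ - θ ^ q ^ j * θ ^ d : F) = T
      generalize hUe : (θ - η ^ q ^ j * η ^ d : F) = U
      generalize (((θ - η) / (θ - η ^ q)) ^ (q ^ j - 1) : F) = G1
      generalize (((θ - η) / (θ - η ^ q ^ 2)) ^ W j : F) = G2
      generalize hAe : ((θ - η) ^ q ^ j : F) = A
      generalize hBe : ((θ - η) ^ d : F) = B
      generalize hCe : ((θ - η ^ q) ^ q ^ j : F) = C
      generalize hDe : ((θ - η ^ q) ^ d : F) = D0
      generalize hEe : ((θ - η ^ q ^ 2) ^ q ^ j : F) = E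
      have hU : U ≠ 0 := hUe ▸ h4
      have hA' : A ≠ 0 := hAe ▸ h5
      have hB' : B ≠ 0 := hBe ▸ h6
      have hC' : C ≠ 0 := hCe ▸ h7
      have hD' : D0 ≠ 0 := hDe ▸ h8
      have hE' : E ≠ 0 := hEe ▸ h9
      field_simp
end

section
/- For every integer d ≥ 1 and every 0 ≤ k ≤ N−1: ∏_{j=1}^{d} (1 − ⟨N(j−1)+k⟩/⟨Nj+k⟩) = ⟨N⟩^{q^k·(q^{Nd}−1)/(q^N−1)} / ∏_{j=1}^{d} ⟨Nj+k⟩. -/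
/-- For every `d ≥ 1` and `0 ≤ k ≤ N-1`:
`∏_{j=1}^{d} (1 - ⟨N(j-1)+k⟩/⟨Nj+k⟩) = ⟨N⟩^{q^k·(q^{Nd}-1)/(q^N-1)} / ∏_{j=1}^{d} ⟨Nj+k⟩`. -/
theorem drinfeld_bracket_partial_product
    (p q N : ℕ) (hp : Nat.Prime p) (hq : ∃ e : ℕ, 0 < e ∧ q = p ^ e)
    (hN : 2 ≤ N)
    (F : Type*) [Field F] [CharP F p]
    (θ η : F) (hη : η ≠ 0) (hper : η ^ q ^ N = η)
    (hθη : ∀ a b : ℕ, θ ^ q ^ a ≠ η ^ q ^ b)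
    (hθ : ∀ m : ℕ, 1 ≤ m → θ ^ q ^ m ≠ θ)
    (br : ℕ → F) (hbr : ∀ m : ℕ, br m = ((θ - η) ^ q ^ m)⁻¹ - (θ - η ^ q ^ m)⁻¹) :
    ∀ d : ℕ, 1 ≤ d → ∀ k : ℕ, k ≤ N - 1 →
      ∏ j ∈ Finset.Icc 1 d, (1 - br (N * (j - 1) + k) / br (N * j + k))
        = br N ^ (q ^ k * ((q ^ (N * d) - 1) / (q ^ N - 1)))
          / ∏ j ∈ Finset.Icc 1 d, br (N * j + k) := by
  haveI : Fact (Nat.Prime p) := ⟨hp⟩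
  obtain ⟨e, he, rfl⟩ := hq
  set q := p ^ e with hqdef
  have hq2 : 2 ≤ q := by
    calc 2 ≤ p := hp.two_le
    _ ≤ p ^ e := Nat.le_self_pow he.ne' p
  -- Frobenius for exponents q ^ m
  have frob : ∀ (x y : F) (m : ℕ), (x - y) ^ q ^ m = x ^ q ^ m - y ^ q ^ m := by
    intro x y m
    have h : q ^ m = p ^ (e * m) := by rw [hqdef, pow_mul]
    rw [h]
    exact sub_pow_char_pow x y (e * m)
  clear_value q
  clear hqdef
  -- nonvanishing of denominators
  have hsub0 : θ - η ≠ 0 := by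
    have := hθη 0 0
    simpa using sub_ne_zero.mpr (by simpa using this)
  have hsubm : ∀ m : ℕ, θ - η ^ q ^ m ≠ 0 := by
    intro m
    exact sub_ne_zero.mpr (by simpa using hθη 0 m)
  -- nonvanishing of brackets
  have hbrne : ∀ m : ℕ, 1 ≤ m → br m ≠ 0 := by
    intro m hm
    rw [hbr]
    intro h
    have h1 : ((θ - η) ^ q ^ m)⁻¹ = (θ - η ^ q ^ m)⁻¹ := by
      have := sub_eq_zero.mp h; linear_combination this
    have h2 : (θ - η) ^ q ^ m = θ - η ^ q ^ m := inv_injective h1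
    rw [frob] at h2
    have : θ ^ q ^ m = θ := by linear_combination h2
    exact hθ m hm this
  -- the key recursion : br (m + N) - br m = br N ^ q ^ m
  have hstep : ∀ m : ℕ, br (m + N) - br m = br N ^ q ^ m := by
    intro m
    have hη' : η ^ q ^ (m + N) = η ^ q ^ m := by
      rw [pow_add, mul_comm, pow_mul, hper]
    have hRHS : br N ^ q ^ m
        = ((θ - η) ^ q ^ (m + N))⁻¹ - ((θ - η) ^ q ^ m)⁻¹ := by
      rw [hbr, hper, frob, inv_pow, inv_pow, ← pow_mul, ← pow_add, add_comm N m]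
    rw [hRHS, hbr, hbr, hη']
    ring
  intro d hd k hk
  -- rewrite each factor
  have hfac : ∀ j ∈ Finset.Icc 1 d,
      (1 - br (N * (j - 1) + k) / br (N * j + k))
        = br N ^ q ^ (N * (j - 1) + k) / br (N * j + k) := by
    intro j hj
    obtain ⟨i, rfl⟩ : ∃ i, j = i + 1 := by
      rcases Finset.mem_Icc.mp hj with ⟨h1, _⟩
      exact ⟨j - 1, by omega⟩
    have hi1 : i + 1 - 1 = i := by omega
    rw [hi1]
    have hb : br (N * (i + 1) + k) ≠ 0 := by
      refine hbrne _ ?_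
      calc 1 ≤ N := by omega
      _ ≤ N * (i + 1) := Nat.le_mul_of_pos_right N (by omega)
      _ ≤ N * (i + 1) + k := Nat.le_add_right _ _
    have hdiff := hstep (N * i + k)
    have hNi : N * i + k + N = N * (i + 1) + k := by ring
    rw [hNi] at hdiff
    rw [← hdiff, sub_div, div_self hb]
  rw [Finset.prod_congr rfl hfac, Finset.prod_div_distrib,
    Finset.prod_pow_eq_pow_sum]
  congr 2
  -- the exponent sum
  have hIcc : Finset.Icc 1 d = Finset.Ico 1 (d + 1) := by
    rw [Finset.Ico_add_one_right_eq_Icc]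
  rw [hIcc, Finset.sum_Ico_eq_sum_range]
  have hterm : ∀ i ∈ Finset.range (d + 1 - 1), q ^ (N * (1 + i - 1) + k)
      = q ^ k * (q ^ N) ^ i := by
    intro i _
    have hi1 : 1 + i - 1 = i := by omega
    rw [hi1, ← pow_mul, ← pow_add]
    congr 1
    omega
  rw [Finset.sum_congr rfl hterm, ← Finset.mul_sum]
  have h2 : 2 ≤ q ^ N := le_trans hq2 (Nat.le_self_pow (by omega) q)
  have hgeo : ∑ i ∈ Finset.range (d + 1 - 1), (q ^ N) ^ i
      = ((q ^ N) ^ d - 1) / (q ^ N - 1) := by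
    rw [Nat.geomSum_eq h2]
    congr 2
  rw [hgeo, ← pow_mul]
end

section
/- For every integer d ≥ 0: ∏_{k=0}^{N−1} Γ_{d,k} = ⟨1⟩⟨2⟩⋯⟨N−1⟩ · (θ − η)^{q·W_{N−1}} · (1 − (θ − η)^{q^N − 1})^{W_{Nd}} · ∏_{k=1}^{N(d+1)−1} ( (θ − η)^{−q^k} / ⟨k⟩ ). -/
/-- For every `d ≥ 0`:
`∏_{k<N} Γ_{d,k} = ⟨1⟩⋯⟨N-1⟩ · (θ-η)^{q·W_{N-1}} · (1-(θ-η)^{q^N-1})^{W_{Nd}}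
· ∏_{k=1}^{N(d+1)-1} ((θ-η)^{-q^k}/⟨k⟩)`. -/
theorem drinfeld_gamma_product_formula
    (p q N : ℕ) (hp : Nat.Prime p) (hq : ∃ e : ℕ, 0 < e ∧ q = p ^ e)
    (hN : 2 ≤ N)
    (F : Type*) [Field F] [CharP F p]
    (θ η : F) (hη : η ≠ 0) (hper : η ^ q ^ N = η)
    (hθη : ∀ a b : ℕ, θ ^ q ^ a ≠ η ^ q ^ b)
    (hθ : ∀ m : ℕ, 1 ≤ m → θ ^ q ^ m ≠ θ)
    (W : ℕ → ℕ) (hW : ∀ i, W i = (q ^ i - 1) / (q - 1))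
    (br : ℕ → F) (hbr : ∀ m : ℕ, br m = ((θ - η) ^ q ^ m)⁻¹ - (θ - η ^ q ^ m)⁻¹)
    (Γ : ℕ → ℕ → F)
    (hΓ : ∀ d k : ℕ, Γ d k
      = ∏ j ∈ Finset.Icc 1 d, (1 - br (N * (j - 1) + k) / br (N * j + k))) :
    ∀ d : ℕ,
      ∏ k ∈ Finset.range N, Γ d k
        = (∏ m ∈ Finset.Icc 1 (N - 1), br m)
          * (θ - η) ^ (q * W (N - 1))
          * (1 - (θ - η) ^ (q ^ N - 1)) ^ W (N * d)
          * ∏ k ∈ Finset.Icc 1 (N * (d + 1) - 1), (((θ - η) ^ q ^ k)⁻¹ / br k) := by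
  haveI : Fact p.Prime := ⟨hp⟩
  have hq2 : 2 ≤ q := by
    obtain ⟨e, he, rfl⟩ := hq
    exact Nat.one_lt_pow he.ne' hp.one_lt
  have frob : ∀ (a b : F) (n : ℕ), (a - b) ^ q ^ n = a ^ q ^ n - b ^ q ^ n := by
    obtain ⟨e, he, rfl⟩ := hq
    intro a b n
    rw [← pow_mul]
    simpa [pow_mul] using sub_pow_char_pow (p := p) (n := e * n) (x := a) (y := b)
  set x : F := θ - η with hxdef
  have hθne : ∀ m : ℕ, θ ≠ η ^ q ^ m := fun m => by simpa using hθη 0 m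
  have hx0 : x ≠ 0 := sub_ne_zero.mpr (by simpa using hθη 0 0)
  have hxm0 : ∀ n : ℕ, x ^ n ≠ 0 := fun n => pow_ne_zero _ hx0
  have hbrne : ∀ m : ℕ, 1 ≤ m → br m ≠ 0 := by
    intro m hm h0
    rw [hbr, sub_eq_zero] at h0
    have h2 : x ^ q ^ m = θ - η ^ q ^ m := inv_injective h0
    rw [hxdef, frob, sub_left_inj] at h2
    exact hθ m hm h2
  have hηper : ∀ m : ℕ, η ^ q ^ (m + N) = η ^ q ^ m := by
    intro m
    rw [add_comm, pow_add, pow_mul, hper]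
  set y : F := 1 - x ^ (q ^ N - 1) with hydef
  -- the basic bracket difference identity
  have hdiff : ∀ m : ℕ, br (m + N) - br m = (x ^ q ^ (m + N))⁻¹ * y ^ q ^ m := by
    intro m
    obtain ⟨c, hc⟩ : ∃ c, q ^ N = c + 1 :=
      ⟨q ^ N - 1, by have := Nat.one_le_pow N q (by omega); omega⟩
    have hexp : q ^ (m + N) = q ^ m + c * q ^ m := by
      rw [pow_add, hc]; ring
    have hy' : y ^ q ^ m = 1 - x ^ (c * q ^ m) := by
      rw [hydef, hc, Nat.add_sub_cancel, frob, one_pow, ← pow_mul]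
    rw [hbr, hbr, hηper m, hy', hexp, pow_add, sub_sub_sub_cancel_right]
    field_simp [hx0]
  -- rewriting a single factor of Γ
  have hkey : ∀ m : ℕ, 1 - br m / br (m + N)
      = (x ^ q ^ (m + N))⁻¹ / br (m + N) * y ^ q ^ m := by
    intro m
    have hb : br (m + N) ≠ 0 := hbrne _ (by omega)
    calc 1 - br m / br (m + N) = (br (m + N) - br m) / br (m + N) := by
          field_simp
      _ = ((x ^ q ^ (m + N))⁻¹ * y ^ q ^ m) / br (m + N) := by rw [hdiff]
      _ = _ := by ring
  have hWsum : ∀ i : ℕ, W i = ∑ k ∈ Finset.range i, q ^ k := fun i => by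
    rw [hW, ← Nat.geomSum_eq hq2]
  -- the clean product formula, by induction on d
  have hC : ∀ d : ℕ, ∏ k ∈ Finset.range N, Γ d k
      = y ^ (∑ m ∈ Finset.range (N * d), q ^ m)
        * ∏ m ∈ Finset.Ico N (N * (d + 1)), ((x ^ q ^ m)⁻¹ / br m) := by
    intro d
    induction d with
    | zero => simp [hΓ]
    | succ d ih =>
      have hΓstep : ∀ k, Γ (d + 1) k
          = Γ d k * (1 - br (N * d + k) / br (N * d + k + N)) := by
        intro k
        rw [hΓ (d + 1) k, Finset.prod_Icc_succ_top (by omega), ← hΓ d k,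
          Nat.add_sub_cancel, show N * (d + 1) + k = N * d + k + N from by ring]
      have step1 : ∏ k ∈ Finset.range N, Γ (d + 1) k
          = (∏ k ∈ Finset.range N, Γ d k)
            * ∏ k ∈ Finset.range N, (1 - br (N * d + k) / br (N * d + k + N)) := by
        rw [← Finset.prod_mul_distrib]
        exact Finset.prod_congr rfl fun k _ => hΓstep k
      have step2 : ∏ k ∈ Finset.range N, (1 - br (N * d + k) / br (N * d + k + N))
          = (∏ k ∈ Finset.range N,
              ((x ^ q ^ (N * (d + 1) + k))⁻¹ / br (N * (d + 1) + k)))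
            * y ^ (∑ k ∈ Finset.range N, q ^ (N * d + k)) := by
        rw [← Finset.prod_pow_eq_pow_sum, ← Finset.prod_mul_distrib]
        refine Finset.prod_congr rfl fun k _ => ?_
        rw [hkey (N * d + k), show N * d + k + N = N * (d + 1) + k from by ring]
      have hsumsplit : ∑ m ∈ Finset.range (N * (d + 1)), q ^ m
          = (∑ m ∈ Finset.range (N * d), q ^ m)
            + ∑ k ∈ Finset.range N, q ^ (N * d + k) := by
        rw [show N * (d + 1) = N * d + N from by ring, Finset.sum_range_add]
      have hprodsplit : ∏ m ∈ Finset.Ico N (N * (d + 1 + 1)), ((x ^ q ^ m)⁻¹ / br m)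
          = (∏ m ∈ Finset.Ico N (N * (d + 1)), ((x ^ q ^ m)⁻¹ / br m))
            * ∏ k ∈ Finset.range N,
                ((x ^ q ^ (N * (d + 1) + k))⁻¹ / br (N * (d + 1) + k)) := by
        rw [← Finset.prod_Ico_consecutive _
            (show N ≤ N * (d + 1) from Nat.le_mul_of_pos_right N (by omega))
            (show N * (d + 1) ≤ N * (d + 1 + 1) from Nat.mul_le_mul_left N (by omega))]
        congr 1
        rw [Finset.prod_Ico_eq_prod_range,
          show N * (d + 1 + 1) - N * (d + 1) = N from by
            rw [show N * (d + 1 + 1) = N * (d + 1) + N from by ring]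
            exact Nat.add_sub_cancel_left (N * (d + 1)) N]
      rw [step1, step2, ih, hsumsplit, hprodsplit, pow_add]
      ring
  intro d
  rw [hC d]
  -- now simplify the right-hand side
  have hIcc1 : ∀ M : ℕ, 1 ≤ M → Finset.Icc 1 (M - 1) = Finset.Ico 1 M := by
    intro M hM
    rw [← Finset.Ico_add_one_right_eq_Icc, Nat.sub_add_cancel hM]
  have hNd1 : 1 ≤ N * (d + 1) := Nat.one_le_iff_ne_zero.mpr (by positivity)
  rw [hIcc1 N (by omega), hIcc1 (N * (d + 1)) hNd1,
    ← Finset.prod_Ico_consecutive (fun k => (x ^ q ^ k)⁻¹ / br k)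
      (show 1 ≤ N from by omega)
      (show N ≤ N * (d + 1) from Nat.le_mul_of_pos_right N (by omega))]
  have hB : (∏ m ∈ Finset.Ico 1 N, br m)
      * ∏ m ∈ Finset.Ico 1 N, ((x ^ q ^ m)⁻¹ / br m)
      = ∏ m ∈ Finset.Ico 1 N, (x ^ q ^ m)⁻¹ := by
    rw [← Finset.prod_mul_distrib]
    refine Finset.prod_congr rfl fun m hm => ?_
    have hm1 : 1 ≤ m := (Finset.mem_Ico.mp hm).1
    rw [mul_comm, div_mul_cancel₀ _ (hbrne m hm1)]
  have hxW : x ^ (q * W (N - 1)) = ∏ m ∈ Finset.Ico 1 N, x ^ q ^ m := by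
    rw [Finset.prod_pow_eq_pow_sum]
    congr 1
    rw [hWsum, Finset.sum_Ico_eq_sum_range, Finset.mul_sum]
    exact Finset.sum_congr rfl fun k _ => by rw [← pow_succ']; ring_nf
  have hcancel : x ^ (q * W (N - 1)) * ∏ m ∈ Finset.Ico 1 N, (x ^ q ^ m)⁻¹ = 1 := by
    rw [hxW, ← Finset.prod_mul_distrib]
    exact Finset.prod_eq_one fun m _ => mul_inv_cancel₀ (hxm0 _)
  rw [hWsum (N * d)]
  linear_combination
    (-(x ^ (q * W (N - 1)) * (y ^ (∑ m ∈ Finset.range (N * d), q ^ m))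
        * ∏ m ∈ Finset.Ico N (N * (d + 1)), ((x ^ q ^ m)⁻¹ / br m))) * hB
    + (-((y ^ (∑ m ∈ Finset.range (N * d), q ^ m))
        * ∏ m ∈ Finset.Ico N (N * (d + 1)), ((x ^ q ^ m)⁻¹ / br m))) * hcancel
end

section
/- Define σ₀(x) = ((θ − η)/η)^{q−1}·x^q, δ(x) = (θ/η)·x, and δσ∞(x) = (θ/η^q)·(θ − η)^{q−1}·x^q. Then the twisted polynomials satisfy (τ − σ₀(x)) ∘ (τ − δ(x)) = (τ − δσ∞(x)) ∘ (τ − x); concretely, for every z ∈ L: (z^q − δ(x)·z)^q − σ₀(x)·(z^q − δ(x)·z) = (z^q − x·z)^q − δσ∞(x)·(z^q − x·z). -/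
/-! Since `z ↦ z ^ q` is additive in characteristic `p`, composing `τ - b` with `τ - a` gives
`τ² - (a + b ^ q) τ + a b`, so the identity amounts to two coefficient identities. The constant
coefficients `σ₀(x) δ(x)` and `δσ∞(x) x` agree by clearing denominators; the `τ`-coefficients
`σ₀(x) + δ(x) ^ q` and `δσ∞(x) + x ^ q` agree because `(θ - η) ^ q = θ ^ q - η ^ q`. -/

section TwistedComposition

variable {R : Type*} [CommRing R] (p : ℕ) [ExpChar R p] (n : ℕ)

theorem frobenius_sub_comp_frobenius_sub (a b z : R) :
    (z ^ p ^ n - b * z) ^ p ^ n - a * (z ^ p ^ n - b * z)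
      = (z ^ p ^ n) ^ p ^ n - (a + b ^ p ^ n) * z ^ p ^ n + a * b * z := by
  rw [sub_pow_expChar_pow, mul_pow]
  ring

end TwistedComposition

section SwapCoefficients

variable {K : Type*} [Field K] (p : ℕ) [ExpChar K p] (n : ℕ) (θ η x : K)

theorem swap_constant_coeff (hη : η ≠ 0) :
    ((θ - η) / η) ^ (p ^ n - 1) * x ^ p ^ n * ((θ / η) * x)
      = (θ / η ^ p ^ n) * (θ - η) ^ (p ^ n - 1) * x ^ p ^ n * x := by
  have hη_pow : η ^ (p ^ n - 1) * η = η ^ p ^ n := by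
    rw [← pow_succ, Nat.sub_add_cancel (expChar_pow_pos K p n)]
  rw [div_pow, ← hη_pow]
  field_simp

theorem swap_frobenius_coeff (hη : η ≠ 0) :
    ((θ - η) / η) ^ (p ^ n - 1) * x ^ p ^ n + ((θ / η) * x) ^ p ^ n
      = (θ / η ^ p ^ n) * (θ - η) ^ (p ^ n - 1) * x ^ p ^ n + x ^ p ^ n := by
  have pow_pred_mul : ∀ a : K, a ^ (p ^ n - 1) * a = a ^ p ^ n := fun a => by
    rw [← pow_succ, Nat.sub_add_cancel (expChar_pow_pos K p n)]
  have hfrob : (θ - η) ^ (p ^ n - 1) * (θ - η) = θ ^ p ^ n - η ^ (p ^ n - 1) * η := by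
    rw [pow_pred_mul, pow_pred_mul, sub_pow_expChar_pow]
  rw [div_pow, mul_pow, div_pow, ← pow_pred_mul η]
  field_simp
  linear_combination -x ^ p ^ n * hfrob

end SwapCoefficients

/-- The twisted-polynomial identity
`(τ - σ₀(x)) ∘ (τ - δ(x)) = (τ - δσ∞(x)) ∘ (τ - x)`, where
`σ₀(x) = ((θ-η)/η)^{q-1}·x^q`, `δ(x) = (θ/η)·x`, `δσ∞(x) = (θ/η^q)·(θ-η)^{q-1}·x^q`,
stated concretely on every `z ∈ L`. -/
theorem twisted_polynomial_swap_identity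
    (p q : ℕ) (hp : Nat.Prime p) (hq : ∃ e : ℕ, 0 < e ∧ q = p ^ e)
    (L : Type*) [Field L] [CharP L p]
    (θ η x : L) (hη : η ≠ 0) :
    ∀ z : L,
      (z ^ q - (θ / η) * x * z) ^ q
          - ((θ - η) / η) ^ (q - 1) * x ^ q * (z ^ q - (θ / η) * x * z)
        = (z ^ q - x * z) ^ q
            - (θ / η ^ q) * (θ - η) ^ (q - 1) * x ^ q * (z ^ q - x * z) := by
  obtain ⟨e, -, rfl⟩ := hq
  have : Fact p.Prime := ⟨hp⟩
  intro z
  rw [frobenius_sub_comp_frobenius_sub, frobenius_sub_comp_frobenius_sub,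
    swap_frobenius_coeff p e θ η x hη, swap_constant_coeff p e θ η x hη]
end

section
/- (a) For every integer j ≥ 1: φ^j(u) = (∏_{i=0}^{j−1} (θ − η^{q^{j−1−i}})^{(q−1)·q^i}) · u^{q^j}, where η^{q^c} means the c-fold q-power of η. (b) If moreover u ≠ 0, η^{q^N} = η, θ ≠ η^{q^b} for all 0 ≤ b < N, and u^{W_N} = ∏_{i=0}^{N−1} (η^{q^{N−1−i}} − θ)^{−q^i}, then φ^N(u) = u. (Part (b) is the key step showing that the automorphism σ_∞ of the narrow class field H^+ = K(η,u) satisfies σ_∞^N = Id, so that Gal(H^+/K) ≅ ℤ_N × ℤ_{W_N}.) -/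
/-- (a) For every `j ≥ 1`,
`φ^j(u) = (∏_{i<j} (θ - η^{q^{j-1-i}})^{(q-1)q^i}) · u^{q^j}`.
(b) If moreover `u ≠ 0`, `η^{q^N} = η`, `θ ≠ η^{q^b}` for `0 ≤ b < N`, and
`u^{W_N} = ∏_{i<N} (η^{q^{N-1-i}} - θ)^{-q^i}`, then `φ^N(u) = u`. -/
theorem sigma_infinity_iterates_and_order
    (p q N : ℕ) (hp : Nat.Prime p) (hq : ∃ e : ℕ, 0 < e ∧ q = p ^ e)
    (hN : 2 ≤ N)
    (L : Type*) [Field L] [CharP L p]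
    (θ η u : L) (φ : L →+* L)
    (hφθ : φ θ = θ) (hφη : φ η = η ^ q)
    (hφu : φ u = (θ - η) ^ (q - 1) * u ^ q) :
    (∀ j : ℕ, 1 ≤ j →
      (⇑φ)^[j] u
        = (∏ i ∈ Finset.range j, (θ - η ^ q ^ (j - 1 - i)) ^ ((q - 1) * q ^ i))
          * u ^ q ^ j)
    ∧ (u ≠ 0 → η ^ q ^ N = η → (∀ b : ℕ, b < N → θ ≠ η ^ q ^ b) →
        u ^ ((q ^ N - 1) / (q - 1))
          = ∏ i ∈ Finset.range N, ((η ^ q ^ (N - 1 - i) - θ) ^ q ^ i)⁻¹ →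
        (⇑φ)^[N] u = u) := by
  have key : ∀ j : ℕ,
      (⇑φ)^[j] u
        = (∏ i ∈ Finset.range j, (θ - η ^ q ^ (j - 1 - i)) ^ ((q - 1) * q ^ i))
          * u ^ q ^ j := by
    intro j
    induction j with
    | zero => simp
    | succ j ih =>
      rw [Function.iterate_succ_apply', ih, map_mul, map_prod, map_pow, hφu,
        Finset.prod_range_succ]
      have h1 : ∀ i ∈ Finset.range j,
          φ ((θ - η ^ q ^ (j - 1 - i)) ^ ((q - 1) * q ^ i))
            = (θ - η ^ q ^ (j + 1 - 1 - i)) ^ ((q - 1) * q ^ i) := by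
        intro i hi
        rw [Finset.mem_range] at hi
        rw [map_pow, map_sub, hφθ, map_pow, hφη, ← pow_mul, ← pow_succ']
        congr 4
        omega
      rw [Finset.prod_congr rfl h1]
      have h0 : j + 1 - 1 - j = 0 := by omega
      rw [h0, pow_zero, pow_one, mul_pow, ← pow_mul]
      have hqq : q ^ (j + 1) = q * q ^ j := pow_succ' q j
      rw [hqq]
      ring
  refine ⟨fun j _ => key j, ?_⟩
  intro hu hη hθ hW
  have hq2 : 2 ≤ q := by
    obtain ⟨e, he, rfl⟩ := hq
    calc 2 ≤ p := hp.two_le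
    _ ≤ p ^ e := Nat.le_self_pow he.ne' p
  -- sign lemma
  have hsgn : ∀ i : ℕ, ((-1 : L)) ^ ((q - 1) * q ^ i) = 1 := by
    intro i
    rcases hp.eq_two_or_odd' with h2 | hodd
    · have hch : (2 : L) = 0 := by
        have := CharP.cast_eq_zero L p
        rw [h2] at this; exact_mod_cast this
      have : (-1 : L) = 1 := by linear_combination -hch
      rw [this, one_pow]
    · have hqodd : Odd q := by
        obtain ⟨e, he, rfl⟩ := hq
        exact hodd.pow
      have : Even ((q - 1) * q ^ i) :=
        (Nat.Odd.sub_odd hqodd odd_one).mul_right _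
      exact this.neg_one_pow
  set a : ℕ → L := fun i => η ^ q ^ (N - 1 - i) - θ with ha
  have hane : ∀ i ∈ Finset.range N, a i ≠ 0 := by
    intro i hi
    rw [Finset.mem_range] at hi
    have := hθ (N - 1 - i) (by omega)
    simpa [ha, sub_ne_zero] using fun h => this h.symm
  set P : L := ∏ i ∈ Finset.range N, (a i) ^ q ^ i with hP
  have hPne : P ≠ 0 := Finset.prod_ne_zero_iff.2 fun i hi => pow_ne_zero _ (hane i hi)
  have hWP : u ^ ((q ^ N - 1) / (q - 1)) = P⁻¹ := by
    rw [hW, hP, ← Finset.prod_inv_distrib]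
  -- rewrite C as P^(q-1)
  have hC : (∏ i ∈ Finset.range N, (θ - η ^ q ^ (N - 1 - i)) ^ ((q - 1) * q ^ i))
      = P ^ (q - 1) := by
    rw [hP, ← Finset.prod_pow]
    refine Finset.prod_congr rfl fun i hi => ?_
    have : θ - η ^ q ^ (N - 1 - i) = -1 * a i := by rw [ha]; ring
    rw [this, mul_pow, hsgn i, one_mul, ← pow_mul, mul_comm (q - 1)]
  have hdvd : (q - 1) ∣ q ^ N - 1 := by
    simpa using Nat.sub_dvd_pow_sub_pow q 1 N
  have hmul : (q - 1) * ((q ^ N - 1) / (q - 1)) = q ^ N - 1 :=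
    Nat.mul_div_cancel' hdvd
  have hqN : q ^ N - 1 + 1 = q ^ N := by
    have : 1 ≤ q ^ N := Nat.one_le_pow _ _ (by omega)
    omega
  have huq : u ^ q ^ N = (P⁻¹) ^ (q - 1) * u := by
    rw [← hqN, pow_succ, ← hmul, mul_comm (q-1), pow_mul, hWP]
  rw [key N, hC, huq, inv_pow]
  field_simp
end

section
/- For all integers n ≥ 0 and j ≥ 0: ψ^n(φ^j(u)) = (η^{q^{N−1}}/η)^{n·q^{j+n}} · (∏_{i=0}^{j+n−1} (θ − η^{q^{j+n−1−i}})^{(q−1)·q^i}) · u^{q^{j+n}}. (With σ_∞ = φ and σ_0 = ψ, this is the formula σ_0^n σ_∞^j(u_{k,μ}) = u_{j+n+k, μ·η_*^n} = (μ·η_*^n)^{q^{j+n+k}}·Θ^{(1−q)γ_{j+n+k}(σ)}·u^{q^{j+n+k}} in the case k = 0, μ = 1, where η_* = η^{(1−q)/q} = η^{q^{N−1}}/η.) -/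
/-!
Put `Θ_m = ∏_{i<m} (θ - η^{q^{m-1-i}})^{(q-1)q^i}` and `u_{m,μ} = μ^{q^m} Θ_m u^{q^m}`, so that `u = u_{0,1}`.
A ring endomorphism `σ` fixing `θ`, raising `η` to the `q`-th power and sending `u` to
`(c(θ - η))^{q-1} u^q` maps `Θ_m` to `Θ_{m+1} / (θ - η)^{(q-1)q^m}`, hence `u_{m,μ}` to `u_{m+1,ν}`
whenever `ν^q = σ(μ) c^{q-1}`. For `φ` take `c = 1` and `μ = ν = 1`; for `ψ` take `c = η⁻¹` and
`μ = η_*^k`, `ν = η_*^{k+1}`, which works because `ψ(η_*) = η_*^q = η^{1-q}` by `η^{q^N} = η`.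
-/

open Finset

section TwistedPow

variable {R : Type*} [CommRing R] (q : ℕ) (θ η u : R)

def thetaProd (m : ℕ) : R :=
  ∏ i ∈ range m, (θ - η ^ q ^ (m - 1 - i)) ^ ((q - 1) * q ^ i)

def twistedPow (m : ℕ) (μ : R) : R :=
  μ ^ q ^ m * thetaProd q θ η m * u ^ q ^ m

variable {q θ η u}

@[simp]
lemma twistedPow_zero_one : twistedPow q θ η u 0 1 = u := by
  simp [twistedPow, thetaProd]

lemma map_thetaProd_mul {σ : R →+* R} (hθ : σ θ = θ) (hη : σ η = η ^ q) (m : ℕ) :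
    σ (thetaProd q θ η m) * (θ - η) ^ ((q - 1) * q ^ m) = thetaProd q θ η (m + 1) := by
  have hfactor : ∀ i ∈ range m, σ ((θ - η ^ q ^ (m - 1 - i)) ^ ((q - 1) * q ^ i))
      = (θ - η ^ q ^ (m + 1 - 1 - i)) ^ ((q - 1) * q ^ i) := by
    intro i hi
    have him : m - 1 - i + 1 = m + 1 - 1 - i := by
      have := mem_range.mp hi
      omega
    rw [map_pow, map_sub, hθ, map_pow, hη, ← pow_mul, ← pow_succ', him]
  rw [thetaProd, thetaProd, map_prod, prod_congr rfl hfactor, prod_range_succ,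
    Nat.add_sub_cancel, Nat.sub_self, pow_zero, pow_one]

lemma map_twistedPow {σ : R →+* R} {c μ ν : R} (hθ : σ θ = θ) (hη : σ η = η ^ q)
    (hu : σ u = (c * (θ - η)) ^ (q - 1) * u ^ q) (hν : σ μ * c ^ (q - 1) = ν ^ q) (m : ℕ) :
    σ (twistedPow q θ η u m μ) = twistedPow q θ η u (m + 1) ν := by
  rw [twistedPow, twistedPow, ← map_thetaProd_mul hθ hη m, pow_succ', pow_mul ν, ← hν,
    pow_mul u]
  simp only [map_mul, map_pow, hu, mul_pow, ← pow_mul]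
  ring

lemma iterate_map_twistedPow {σ : R →+* R} {c : R} (μ : ℕ → R) (hθ : σ θ = θ)
    (hη : σ η = η ^ q) (hu : σ u = (c * (θ - η)) ^ (q - 1) * u ^ q)
    (hμ : ∀ k, σ (μ k) * c ^ (q - 1) = μ (k + 1) ^ q) (m n : ℕ) :
    σ^[n] (twistedPow q θ η u m (μ 0)) = twistedPow q θ η u (m + n) (μ n) := by
  induction n with
  | zero => rfl
  | succ n ih => rw [Function.iterate_succ_apply', ih, map_twistedPow hθ hη hu (hμ n)]; rfl

end TwistedPow

theorem sigma_zero_sigma_infinity_iterates_general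
    (p q N : ℕ) (hp : Nat.Prime p) (hq : ∃ e : ℕ, 0 < e ∧ q = p ^ e)
    (hN : 2 ≤ N)
    (L : Type*) [Field L]
    (θ η u : L) (hη : η ≠ 0) (hper : η ^ q ^ N = η)
    (φ : L →+* L)
    (hφθ : φ θ = θ) (hφη : φ η = η ^ q)
    (hφu : φ u = (θ - η) ^ (q - 1) * u ^ q)
    (ψ : L →+* L)
    (hψθ : ψ θ = θ) (hψη : ψ η = η ^ q)
    (hψu : ψ u = ((θ - η) / η) ^ (q - 1) * u ^ q) :
    ∀ n j : ℕ,
      (⇑ψ)^[n] ((⇑φ)^[j] u)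
        = (η ^ q ^ (N - 1) / η) ^ (n * q ^ (j + n))
          * (∏ i ∈ Finset.range (j + n),
              (θ - η ^ q ^ (j + n - 1 - i)) ^ ((q - 1) * q ^ i))
          * u ^ q ^ (j + n) := by
  intro n j
  have hq_pos : 0 < q := by
    obtain ⟨e, -, rfl⟩ := hq
    exact pow_pos hp.pos e
  set ηs := η ^ q ^ (N - 1) / η
  have hηs_pow : ηs ^ q = η / η ^ q := by
    rw [div_pow, ← pow_mul, ← pow_succ, Nat.sub_add_cancel (by omega), hper]
  have hψηs : ψ ηs = ηs ^ q := by
    rw [map_div₀, map_pow, hψη, ← pow_mul, ← pow_succ', Nat.sub_add_cancel (by omega), hper,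
      hηs_pow]
  have hηs_pow' : ηs ^ q = η⁻¹ ^ (q - 1) := by
    rw [hηs_pow, inv_pow, ← Nat.sub_add_cancel hq_pos, pow_succ, Nat.add_sub_cancel]
    field_simp
  have hφu' : φ u = (1 * (θ - η)) ^ (q - 1) * u ^ q := by rw [hφu, one_mul]
  have hψu' : ψ u = (η⁻¹ * (θ - η)) ^ (q - 1) * u ^ q := by rw [hψu, div_eq_inv_mul]
  have hφ := iterate_map_twistedPow (fun _ ↦ 1) hφθ hφη hφu' (by simp) 0 j
  have hψ := iterate_map_twistedPow (ηs ^ ·) hψθ hψη hψu'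
    (fun k ↦ by rw [map_pow, hψηs, ← hηs_pow', ← pow_succ, ← pow_mul, ← pow_mul, mul_comm]) j n
  simp only [twistedPow_zero_one, pow_zero, zero_add] at hφ hψ
  rw [hφ, hψ, twistedPow, thetaProd, ← pow_mul, mul_comm n]

/-- For all `n, j ≥ 0`:
`ψ^n(φ^j(u)) = (η^{q^{N-1}}/η)^{n·q^{j+n}} · (∏_{i<j+n} (θ - η^{q^{j+n-1-i}})^{(q-1)q^i}) · u^{q^{j+n}}`,
the formula `σ₀^n σ∞^j(u) = u_{j+n, η_*^n}` in the case `k = 0`, `μ = 1`. -/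
theorem sigma_zero_sigma_infinity_iterates
    (p q N : ℕ) (hp : Nat.Prime p) (hq : ∃ e : ℕ, 0 < e ∧ q = p ^ e)
    (hN : 2 ≤ N)
    (L : Type*) [Field L] [CharP L p]
    (θ η u : L) (hη : η ≠ 0) (hper : η ^ q ^ N = η)
    (φ : L →+* L)
    (hφθ : φ θ = θ) (hφη : φ η = η ^ q)
    (hφu : φ u = (θ - η) ^ (q - 1) * u ^ q)
    (ψ : L →+* L)
    (hψθ : ψ θ = θ) (hψη : ψ η = η ^ q)
    (hψu : ψ u = ((θ - η) / η) ^ (q - 1) * u ^ q) :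
    ∀ n j : ℕ,
      (⇑ψ)^[n] ((⇑φ)^[j] u)
        = (η ^ q ^ (N - 1) / η) ^ (n * q ^ (j + n))
          * (∏ i ∈ Finset.range (j + n),
              (θ - η ^ q ^ (j + n - 1 - i)) ^ ((q - 1) * q ^ i))
          * u ^ q ^ (j + n) :=
  sigma_zero_sigma_infinity_iterates_general p q N hp hq hN L θ η u hη hper φ hφθ hφη hφu ψ hψθ hψη
    hψu
end

section
/- Fix 0 ≤ n ≤ N−1 and let (c_0, c_1, …, c_N) be the coefficient list of the twisted-polynomial product (τ − ⟦u⟧_{N−n}^{N−1}) ∘ ⋯ ∘ (τ − ⟦u⟧_{N−n}^{1}) ∘ (τ − ⟦u⟧_{N−n}^{0}). Then in F(t): ℓ · t^n / ∏_{k=0}^{N−1} (t − η^{q^k}) = (η^{q^{N−1}})^{n} · ∑_{i=0}^{N} c_i · ℓ^{q^i} · s_i(t). (Via the Anderson-motive description s(u) = ℓ·s_0 with τ^i s(u) = ℓ^{q^i} s_i, this is exactly the statement that the sign-normalized Hayes A-module ψ^u with ψ^u_{I_∞} = τ − u satisfies ψ^u_{T_n} = η^{n/q} · (τ − ⟦u⟧_{N−n}^{N−1})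 ∘ ⋯ ∘ (τ − ⟦u⟧_{N−n}^{0}), where T_n = t^n/ρ(t).) -/
/-!
Let `τ` act on `F(t)` by `τ y = f⁽⁰⁾ · y⁽¹⁾`, where `y⁽¹⁾` raises the coefficients of `y` to the
`q`-th power. Then `τ^i ℓ = ℓ^{q^i} s_i`, so the right-hand side is
`(τ - ⟦u⟧^{N-1}) ∘ ⋯ ∘ (τ - ⟦u⟧^0)` applied to `ℓ`, where `⟦u⟧^i = ⟦u⟧_l^i` and `l = N - n`.
Every partial product keeps the shape `α_m t^{m-l} / ∏_{k<m} (t - η^{q^k})` (truncated exponent):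
as `f⁽⁰⁾ = (θ - t) / ((t - η)(θ - η))`, the next step has a linear numerator, and `⟦u⟧^m` kills its
`t`-coefficient while `m < l` and its constant term afterwards. Explicitly
`α_m η^{(m-l) q^{m-1}} = ℓ u^{W_m} D_m` with `D_m = ∏_{i<m} (η^{q^{m-1-i}} - θ)^{q^i}`; since
`G_m = D_m^{q-1}`, this is what makes `⟦u⟧^m` the right constant, and at `m = N` the normalisation
`u^{W_N} D_N = 1` gives `α_N η^{n q^{N-1}} = ℓ`.
-/

open Finset

namespace RatFunc

variable {K : Type*} [Field K]

noncomputable def mapCoeffs (σ : K →+* K) : RatFunc K →+* RatFunc K :=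
  mapRingHom (Polynomial.mapRingHom σ)
    (nonZeroDivisors_le_comap_nonZeroDivisors_of_injective _
      (Polynomial.map_injective σ σ.injective))

lemma mapCoeffs_algebraMap (σ : K →+* K) (P : Polynomial K) :
    mapCoeffs σ (algebraMap _ _ P) = algebraMap _ _ (P.map σ) := by
  rw [mapCoeffs, coe_mapRingHom_eq_coe_map]
  simpa using map_apply_div (Polynomial.mapRingHom σ) _ P 1

@[simp]
lemma mapCoeffs_X (σ : K →+* K) : mapCoeffs σ X = X := by
  rw [← algebraMap_X, mapCoeffs_algebraMap, Polynomial.map_X]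

@[simp]
lemma mapCoeffs_C (σ : K →+* K) (a : K) : mapCoeffs σ (C a) = C (σ a) := by
  rw [← algebraMap_C, mapCoeffs_algebraMap, Polynomial.map_C, algebraMap_C]

lemma X_sub_C_ne_zero (a : K) : (X - C a : RatFunc K) ≠ 0 := by
  rw [← algebraMap_X, ← algebraMap_C, ← map_sub]
  exact algebraMap_ne_zero (Polynomial.X_sub_C_ne_zero a)

end RatFunc

section TwistedProduct

variable {R : Type*} [CommRing R] (σ : R →+* R) (a : ℕ → R) (c : ℕ → ℕ → R)

/-- `c m` lists the coefficients of `(τ + a (m - 1)) * ⋯ * (τ + a 0)` in the skew polynomial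
ring over `R` with `τ * r = σ r * τ`. -/
structure IsTwistedProductCoeffs : Prop where
  zero : ∀ i, c 0 i = if i = 0 then 1 else 0
  succ_zero : ∀ m, c (m + 1) 0 = a m * c m 0
  succ_succ : ∀ m i, c (m + 1) (i + 1) = σ (c m i) + a m * c m (i + 1)

namespace IsTwistedProductCoeffs

variable {σ a c}

lemma eq_zero_of_lt (h : IsTwistedProductCoeffs σ a c) {m i : ℕ} (hmi : m < i) : c m i = 0 := by
  induction m generalizing i with
  | zero => rw [h.zero, if_neg hmi.ne']
  | succ m ih =>
    obtain ⟨i, rfl⟩ := Nat.exists_eq_add_one_of_ne_zero (Nat.ne_zero_of_lt hmi)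
    rw [h.succ_succ, ih (by omega), ih (by omega), map_zero, mul_zero, add_zero]

lemma map {S : Type*} [CommRing S] (h : IsTwistedProductCoeffs σ a c) (f : R →+* S)
    {σ' : S →+* S} (hσ' : ∀ r, σ' (f r) = f (σ r)) :
    IsTwistedProductCoeffs σ' (fun m => f (a m)) (fun m i => f (c m i)) where
  zero i := by rw [h.zero]; split_ifs <;> simp
  succ_zero m := by rw [h.succ_zero, map_mul]
  succ_succ m i := by rw [h.succ_succ, map_add, map_mul, hσ']

/-- With `x i = τ ^ i (x 0)` for the `σ`-semilinear action `τ y = φ * σ y`, the sums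
`∑ i, c m i * x i` are the images of `x 0` under the successive partial products. -/
lemma sum_mul_succ (h : IsTwistedProductCoeffs σ a c) (φ : R) (x : ℕ → R)
    (hx : ∀ i, x (i + 1) = φ * σ (x i)) {M m : ℕ} (hm : m < M) :
    ∑ i ∈ range (M + 1), c (m + 1) i * x i
      = φ * σ (∑ i ∈ range (M + 1), c m i * x i) + a m * ∑ i ∈ range (M + 1), c m i * x i := by
  have hτ : φ * σ (∑ i ∈ range (M + 1), c m i * x i) = ∑ i ∈ range M, σ (c m i) * x (i + 1) := by
    rw [map_sum, mul_sum, sum_range_succ, h.eq_zero_of_lt hm, zero_mul, map_zero, mul_zero,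
      add_zero]
    exact sum_congr rfl fun i _ => by rw [hx, map_mul]; ring
  rw [hτ, sum_range_succ', sum_range_succ' _ M, mul_add, mul_sum]
  simp only [h.succ_succ, h.succ_zero, add_mul, sum_add_distrib, mul_assoc]
  ring

end IsTwistedProductCoeffs

end TwistedProduct

namespace HayesModule

open RatFunc

variable {F : Type*} [Field F]

def etaProd (q : ℕ) (θ η : F) (m : ℕ) : F := ∏ i ∈ range m, (η ^ q ^ (m - 1 - i) - θ) ^ q ^ i

/-- `G_i` of the statement. -/
def twistG (q : ℕ) (θ η : F) (i : ℕ) : F :=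
  ∏ m ∈ range i, (θ - η ^ q ^ (i - 1 - m)) ^ ((q - 1) * q ^ m)

/-- `⟦u⟧_l^i` of the statement. -/
def uBracket (q : ℕ) (θ η u : F) (l i : ℕ) : F :=
  if i < l then twistG q θ η i * u ^ q ^ i
  else θ * (η ^ (q ^ (i - 1) * (q - 1) * (i - l) + q ^ i))⁻¹ * twistG q θ η i * u ^ q ^ i

noncomputable def hayesCoeff (q : ℕ) (θ η u ℓ : F) (l m : ℕ) : F :=
  ℓ * u ^ (∑ i ∈ range m, q ^ i) * etaProd q θ η m / η ^ ((m - l) * q ^ (m - 1))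

noncomputable def shtuka (q : ℕ) (θ η : F) (k : ℕ) : RatFunc F :=
  (X - C (η ^ q ^ k))⁻¹ - C ((θ ^ q ^ k - η ^ q ^ k)⁻¹)

lemma shtuka_mul_add_eq {θ η ζ : F} (hθη : θ ≠ η) {P Q : RatFunc F}
    (hP : P ≠ 0) (hPQ : P * (X - C ζ) = (X - C η) * Q) (β b α : F) (j : ℕ) :
    ((X - C η)⁻¹ - C ((θ - η)⁻¹)) * (C β * X ^ j / Q) + C b * (C α * X ^ j / P)
      = (C (β * θ - b * α * (θ - η) * ζ) + C (b * α * (θ - η) - β) * X) * X ^ j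
        / (C (θ - η) * (P * (X - C ζ))) := by
  have hθη' : C θ - C η ≠ 0 := by rwa [← map_sub, map_ne_zero, sub_ne_zero]
  have hQ : Q ≠ 0 := by
    rintro rfl
    simp [hP, X_sub_C_ne_zero] at hPQ
  have hη := X_sub_C_ne_zero η
  have hζ := X_sub_C_ne_zero ζ
  simp only [map_sub, map_mul, map_inv₀]
  field_simp
  linear_combination (X ^ j * C β * (C θ - X)) * hPQ

lemma succ_sub_mul_pow (q l m : ℕ) :
    (m + 1 - l) * q ^ m = (m - l) * q ^ (m - 1) * q + if l ≤ m then q ^ m else 0 := by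
  split_ifs with hlm
  · rcases m with _ | m
    · simp [show l = 0 by omega]
    · rw [show m + 1 + 1 - l = (m + 1 - l) + 1 by omega, Nat.add_sub_cancel, pow_succ]
      ring
  · simp [show m + 1 - l = 0 by omega, show m - l = 0 by omega]

lemma geom_sum_mul_sub_one_add_one {q : ℕ} (hq : q ≠ 0) (m : ℕ) :
    (∑ i ∈ range m, q ^ i) * (q - 1) + 1 = q ^ m := by
  obtain ⟨r, rfl⟩ := Nat.exists_eq_add_one_of_ne_zero hq
  simpa using geom_sum_mul_add r m

variable {q : ℕ} {θ η u ℓ : F} (l : ℕ)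

lemma etaProd_succ (m : ℕ) : etaProd q θ η (m + 1) = (η ^ q ^ m - θ) * etaProd q θ η m ^ q := by
  rw [etaProd, prod_range_succ', etaProd, ← prod_pow, mul_comm]
  simp only [pow_zero, pow_one, Nat.add_sub_cancel, Nat.sub_zero]
  congr 1
  refine prod_congr rfl fun i _ => ?_
  rw [← pow_mul, ← pow_succ, show m - (i + 1) = m - 1 - i by omega]

lemma etaProd_ne_zero (h : ∀ k, η ^ q ^ k ≠ θ) (m : ℕ) : etaProd q θ η m ≠ 0 :=
  prod_ne_zero_iff.mpr fun _ _ => pow_ne_zero _ (sub_ne_zero.mpr (h _))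

lemma twistG_eq_etaProd_pow (hsign : (-1 : F) ^ (q - 1) = 1) (i : ℕ) :
    twistG q θ η i = etaProd q θ η i ^ (q - 1) := by
  rw [twistG, etaProd, ← prod_pow]
  refine prod_congr rfl fun m _ => ?_
  rw [← pow_mul, mul_comm (q ^ m), pow_mul, pow_mul, ← neg_sub, neg_pow, hsign, one_mul]

lemma hayesCoeff_mul_pow (hη : η ≠ 0) (m : ℕ) :
    hayesCoeff q θ η u ℓ l m * η ^ ((m - l) * q ^ (m - 1))
      = ℓ * u ^ (∑ i ∈ range m, q ^ i) * etaProd q θ η m :=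
  div_mul_cancel₀ _ (pow_ne_zero _ hη)

lemma hayesCoeff_succ (hη : η ≠ 0) (hq : q ≠ 0) (hℓ : ℓ ^ (q - 1) = u * (η - θ)) (m : ℕ) :
    hayesCoeff q θ η u ℓ l (m + 1) * (η - θ) * η ^ (if l ≤ m then q ^ m else 0)
      = hayesCoeff q θ η u ℓ l m ^ q * (η ^ q ^ m - θ) := by
  have hsucc := hayesCoeff_mul_pow (q := q) (θ := θ) (u := u) (ℓ := ℓ) l hη (m + 1)
  have h := congrArg (· ^ q) (hayesCoeff_mul_pow (q := q) (θ := θ) (u := u) (ℓ := ℓ) l hη m)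
  simp only [mul_pow] at h
  rw [Nat.add_sub_cancel, succ_sub_mul_pow, pow_add, geom_sum_succ, pow_succ, pow_mul,
    etaProd_succ] at hsucc
  rw [← pow_sub_one_mul hq ℓ, hℓ] at h
  refine mul_right_cancel₀ (pow_ne_zero q (pow_ne_zero ((m - l) * q ^ (m - 1)) hη)) ?_
  linear_combination (η - θ) * hsucc - (η ^ q ^ m - θ) * h

lemma hayesCoeff_pow_sub_one (hη : η ≠ 0) (hq : q ≠ 0) (hℓ : ℓ ^ (q - 1) = u * (η - θ))
    (hsign : (-1 : F) ^ (q - 1) = 1) (m : ℕ) :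
    hayesCoeff q θ η u ℓ l m ^ (q - 1) * η ^ (q ^ (m - 1) * (q - 1) * (m - l))
      = (η - θ) * twistG q θ η m * u ^ q ^ m := by
  have h := congrArg (· ^ (q - 1)) (hayesCoeff_mul_pow (q := q) (θ := θ) (u := u) (ℓ := ℓ) l hη m)
  simp only [mul_pow, ← pow_mul] at h
  rw [twistG_eq_etaProd_pow hsign, ← geom_sum_mul_sub_one_add_one hq m, pow_succ,
    show q ^ (m - 1) * (q - 1) * (m - l) = (m - l) * q ^ (m - 1) * (q - 1) by ring, h, hℓ]
  ring

lemma uBracket_mul_hayesCoeff (hη : η ≠ 0) (hq : q ≠ 0) (hℓ : ℓ ^ (q - 1) = u * (η - θ))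
    (hsign : (-1 : F) ^ (q - 1) = 1) (m : ℕ) :
    uBracket q θ η u l m * hayesCoeff q θ η u ℓ l m * (θ - η) * η ^ (if l ≤ m then q ^ m else 0)
      = -(hayesCoeff q θ η u ℓ l m ^ q * if l ≤ m then θ else 1) := by
  have key := hayesCoeff_pow_sub_one l hη hq hℓ hsign m
  rw [← pow_sub_one_mul hq, uBracket]
  split_ifs with hml hlm hlm
  · omega
  · rw [show m - l = 0 by omega, mul_zero, pow_zero, mul_one] at key
    linear_combination hayesCoeff q θ η u ℓ l m * key
  · rw [pow_add]
    field_simp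
    linear_combination θ * hayesCoeff q θ η u ℓ l m * key
  · omega

lemma twist_numerator_eq (hη : η ≠ 0) (hq : q ≠ 0) (hℓ : ℓ ^ (q - 1) = u * (η - θ))
    (hsign : (-1 : F) ^ (q - 1) = 1) (m : ℕ) :
    (C (hayesCoeff q θ η u ℓ l m ^ q * θ
          - -uBracket q θ η u l m * hayesCoeff q θ η u ℓ l m * (θ - η) * η ^ q ^ m)
        + C (-uBracket q θ η u l m * hayesCoeff q θ η u ℓ l m * (θ - η)
          - hayesCoeff q θ η u ℓ l m ^ q) * X) * X ^ (m - l)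
      = C (θ - η) * (C (hayesCoeff q θ η u ℓ l (m + 1)) * X ^ (m + 1 - l)) := by
  have hB := uBracket_mul_hayesCoeff l hη hq hℓ hsign m
  have hrec := hayesCoeff_succ l hη hq hℓ m
  set α := hayesCoeff q θ η u ℓ l m
  set α' := hayesCoeff q θ η u ℓ l (m + 1)
  set b := uBracket q θ η u l m
  by_cases hlm : l ≤ m
  · simp only [if_pos hlm] at hB hrec
    have hX : -b * α * (θ - η) - α ^ q = (θ - η) * α' := by
      refine mul_right_cancel₀ (pow_ne_zero (q ^ m) hη) ?_
      linear_combination -hB + hrec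
    rw [show α ^ q * θ - -b * α * (θ - η) * η ^ q ^ m = 0 by linear_combination hB, hX,
      show m + 1 - l = m - l + 1 by omega]
    simp only [map_mul, map_zero, zero_add, pow_succ]
    ring
  · simp only [if_neg hlm, pow_zero, mul_one] at hB hrec
    rw [show -b * α * (θ - η) - α ^ q = 0 by linear_combination -hB,
      show α ^ q * θ - -b * α * (θ - η) * η ^ q ^ m = (θ - η) * α' by
        linear_combination η ^ q ^ m * hB + hrec,
      show m - l = 0 by omega, show m + 1 - l = 0 by omega]
    simp only [map_mul, map_zero, zero_mul, add_zero, pow_zero, mul_one]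

lemma mapCoeffs_shtuka {σ : F →+* F} (hσ : ∀ x, σ x = x ^ q) (k : ℕ) :
    mapCoeffs σ (shtuka q θ η k) = shtuka q θ η (k + 1) := by
  rw [shtuka, shtuka, map_sub, map_inv₀, map_sub, mapCoeffs_X, mapCoeffs_C, mapCoeffs_C, map_inv₀,
    map_sub, hσ, hσ]
  simp only [← pow_mul, ← pow_succ]

theorem sum_coeff_mul_prod_shtuka {σ : F →+* F} (hσ : ∀ x, σ x = x ^ q) (hθη : θ ≠ η)
    (hη : η ≠ 0) (hℓ : ℓ ^ (q - 1) = u * (η - θ)) {c : ℕ → ℕ → F}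
    (hc : IsTwistedProductCoeffs σ (fun m => -uBracket q θ η u l m) c) {M m : ℕ} (hm : m ≤ M) :
    ∑ i ∈ range (M + 1), C (c m i * ℓ ^ q ^ i) * ∏ k ∈ range i, shtuka q θ η k
      = C (hayesCoeff q θ η u ℓ l m) * X ^ (m - l) / ∏ k ∈ range m, (X - C (η ^ q ^ k)) := by
  have hq : q ≠ 0 := by
    rintro rfl
    simpa using hσ 0
  have hsign : (-1 : F) ^ (q - 1) = 1 := by
    have h := pow_sub_one_mul hq (-1 : F)
    rw [← hσ, map_neg, map_one] at h
    linear_combination -h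
  set x : ℕ → RatFunc F := fun i => C (ℓ ^ q ^ i) * ∏ k ∈ range i, shtuka q θ η k
  have hx (i : ℕ) : x (i + 1) = shtuka q θ η 0 * mapCoeffs σ (x i) := by
    simp only [x, map_mul, map_prod, mapCoeffs_C, hσ, mapCoeffs_shtuka hσ, prod_range_succ',
      ← pow_mul, ← pow_succ]
    ring
  have hcC := hc.map C (fun r => mapCoeffs_C σ r)
  simp only [map_mul, mul_assoc]
  change ∑ i ∈ range (M + 1), C (c m i) * x i = _
  induction m with
  | zero => simp [hc.zero, hayesCoeff, etaProd, x]
  | succ m ih =>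
    rw [hcC.sum_mul_succ _ x hx (by omega : m < M), ih (by omega)]
    have hPQ : (∏ k ∈ range m, (X - C (η ^ q ^ k))) * (X - C (η ^ q ^ m))
        = (X - C η) * ∏ k ∈ range m, (X - C (η ^ q ^ (k + 1))) := by
      rw [← prod_range_succ, prod_range_succ', pow_zero, pow_one, mul_comm]
    rw [map_div₀, map_mul, map_pow, mapCoeffs_C, mapCoeffs_X, hσ, map_prod]
    simp only [map_sub, mapCoeffs_C, mapCoeffs_X, hσ, ← pow_mul, ← pow_succ]
    rw [shtuka, pow_zero, pow_one, pow_one, shtuka_mul_add_eq hθη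
      (prod_ne_zero_iff.mpr fun k _ => X_sub_C_ne_zero _) hPQ, twist_numerator_eq l hη hq hℓ hsign,
      prod_range_succ, mul_div_mul_left _ _ (by rwa [map_ne_zero, sub_ne_zero])]

lemma pow_mul_hayesCoeff (hη : η ≠ 0) {N n : ℕ} (hn : n ≤ N)
    (hu : u ^ (∑ i ∈ range N, q ^ i) * etaProd q θ η N = 1) :
    (η ^ q ^ (N - 1)) ^ n * hayesCoeff q θ η u ℓ (N - n) N = ℓ := by
  have h := hayesCoeff_mul_pow (q := q) (θ := θ) (u := u) (ℓ := ℓ) (N - n) hη N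
  rw [Nat.sub_sub_self hn, mul_assoc, hu, mul_one] at h
  rw [← pow_mul, mul_comm, mul_comm (q ^ (N - 1))]
  exact h

end HayesModule

open HayesModule RatFunc in
theorem hayes_module_factorization_general
    (p q N : ℕ) (hp : Nat.Prime p) (hq : ∃ e : ℕ, 0 < e ∧ q = p ^ e)
    (F : Type*) [Field F] [CharP F p]
    (θ η : F) (hη : η ≠ 0)
    (hθη : ∀ a b : ℕ, θ ^ q ^ a ≠ η ^ q ^ b)
    (W : ℕ → ℕ) (hW : ∀ i, W i = (q ^ i - 1) / (q - 1))
    (u ℓ : F)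
    (hℓq : ℓ ^ (q - 1) = -u * (θ - η))
    (huW : u ^ W N = ∏ i ∈ Finset.range N, ((η ^ q ^ (N - 1 - i) - θ) ^ q ^ i)⁻¹)
    -- G_i = ∏_{m<i} (θ - η^{q^{i-1-m}})^{(q-1)·q^m}
    (G : ℕ → F)
    (hG : ∀ i : ℕ, G i = ∏ m ∈ Finset.range i,
      (θ - η ^ q ^ (i - 1 - m)) ^ ((q - 1) * q ^ m))
    -- ⟦u⟧_l^i
    (B : ℕ → ℕ → F)
    (hB_lt : ∀ l i : ℕ, i < l → B l i = G i * u ^ q ^ i)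
    (hB_ge : ∀ l i : ℕ, l ≤ i → B l i
      = θ * (η ^ (q ^ (i - 1) * (q - 1) * (i - l) + q ^ i))⁻¹ * G i * u ^ q ^ i)
    (n : ℕ) (hn : n ≤ N - 1)
    -- coefficient lists of the iterated twisted-polynomial products
    -- (τ - a_{m-1}) ∘ ⋯ ∘ (τ - a_0) with a_i = ⟦u⟧_{N-n}^i
    (c : ℕ → ℕ → F)
    (hc0 : ∀ i : ℕ, c 0 i = if i = 0 then 1 else 0)
    (hcz : ∀ m : ℕ, c (m + 1) 0 = -B (N - n) m * c m 0)
    (hcs : ∀ m i : ℕ, c (m + 1) (i + 1) = (c m i) ^ q + (-B (N - n) m) * c m (i + 1))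
    -- the twisted shtuka functions f^{(k)} and products s_i in F(t)
    (f : ℕ → RatFunc F)
    (hf : ∀ k : ℕ, f k = (RatFunc.X - RatFunc.C (η ^ q ^ k))⁻¹
        - RatFunc.C ((θ ^ q ^ k - η ^ q ^ k)⁻¹))
    (s : ℕ → RatFunc F)
    (hs : ∀ i : ℕ, s i = ∏ k ∈ Finset.range i, f k) :
    RatFunc.C ℓ * RatFunc.X ^ n
        / (∏ k ∈ Finset.range N, (RatFunc.X - RatFunc.C (η ^ q ^ k)))
      = RatFunc.C ((η ^ q ^ (N - 1)) ^ n)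
        * ∑ i ∈ Finset.range (N + 1), RatFunc.C (c N i * ℓ ^ q ^ i) * s i := by
  obtain ⟨e, he, rfl⟩ := hq
  have : Fact p.Prime := ⟨hp⟩
  have hσ (x : F) : iterateFrobenius F p e x = x ^ p ^ e := iterateFrobenius_def ..
  have hB : B (N - n) = uBracket (p ^ e) θ η u (N - n) := by
    funext i
    rw [uBracket, twistG, ← hG]
    split_ifs with hi
    exacts [hB_lt _ _ hi, hB_ge _ _ (not_lt.mp hi)]
  have hc : IsTwistedProductCoeffs (iterateFrobenius F p e)
      (fun m => -uBracket (p ^ e) θ η u (N - n) m) c :=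
    ⟨hc0, fun m => by rw [hcz, hB], fun m i => by rw [hcs, hσ, hB]⟩
  have hs' (i : ℕ) : s i = ∏ k ∈ range i, shtuka (p ^ e) θ η k := by simp only [hs, hf, shtuka]
  have hu : u ^ (∑ i ∈ range N, (p ^ e) ^ i) * etaProd (p ^ e) θ η N = 1 := by
    rw [Nat.geomSum_eq (Nat.one_lt_pow he.ne' hp.one_lt), ← hW, huW, prod_inv_distrib]
    exact inv_mul_cancel₀ (etaProd_ne_zero (fun k => by simpa using (hθη 0 k).symm) N)
  simp only [hs']
  rw [sum_coeff_mul_prod_shtuka (N - n) hσ (by simpa using hθη 0 0) hη (by rw [hℓq]; ring) hc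
    le_rfl, ← mul_div_assoc, ← mul_assoc, ← map_mul, pow_mul_hayesCoeff hη (by omega) hu,
    Nat.sub_sub_self (by omega)]

/-- Explicit factorization of the sign-normalized Hayes module:
with `(c_0,…,c_N)` the coefficient list of
`(τ - ⟦u⟧_{N-n}^{N-1}) ∘ ⋯ ∘ (τ - ⟦u⟧_{N-n}^{0})`, one has in `F(t)`:
`ℓ·t^n/∏_{k<N}(t-η^{q^k}) = (η^{q^{N-1}})^n · ∑_{i≤N} c_i·ℓ^{q^i}·s_i(t)`. -/
theorem hayes_module_factorization
    (p q N : ℕ) (hp : Nat.Prime p) (hq : ∃ e : ℕ, 0 < e ∧ q = p ^ e)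
    (hN : 2 ≤ N)
    (F : Type*) [Field F] [CharP F p]
    (θ η : F) (hη : η ≠ 0) (hper : η ^ q ^ N = η)
    (hθη : ∀ a b : ℕ, θ ^ q ^ a ≠ η ^ q ^ b)
    (hθ : ∀ m : ℕ, 1 ≤ m → θ ^ q ^ m ≠ θ)
    (W : ℕ → ℕ) (hW : ∀ i, W i = (q ^ i - 1) / (q - 1))
    (u ℓ : F) (hu : u ≠ 0) (hℓ : ℓ ≠ 0)
    (hℓq : ℓ ^ (q - 1) = -u * (θ - η))
    (huW : u ^ W N = ∏ i ∈ Finset.range N, ((η ^ q ^ (N - 1 - i) - θ) ^ q ^ i)⁻¹)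
    -- G_i = ∏_{m<i} (θ - η^{q^{i-1-m}})^{(q-1)·q^m}
    (G : ℕ → F)
    (hG : ∀ i : ℕ, G i = ∏ m ∈ Finset.range i,
      (θ - η ^ q ^ (i - 1 - m)) ^ ((q - 1) * q ^ m))
    -- ⟦u⟧_l^i
    (B : ℕ → ℕ → F)
    (hB_lt : ∀ l i : ℕ, i < l → B l i = G i * u ^ q ^ i)
    (hB_ge : ∀ l i : ℕ, l ≤ i → B l i
      = θ * (η ^ (q ^ (i - 1) * (q - 1) * (i - l) + q ^ i))⁻¹ * G i * u ^ q ^ i)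
    (n : ℕ) (hn : n ≤ N - 1)
    -- coefficient lists of the iterated twisted-polynomial products
    -- (τ - a_{m-1}) ∘ ⋯ ∘ (τ - a_0) with a_i = ⟦u⟧_{N-n}^i
    (c : ℕ → ℕ → F)
    (hc0 : ∀ i : ℕ, c 0 i = if i = 0 then 1 else 0)
    (hcz : ∀ m : ℕ, c (m + 1) 0 = -B (N - n) m * c m 0)
    (hcs : ∀ m i : ℕ, c (m + 1) (i + 1) = (c m i) ^ q + (-B (N - n) m) * c m (i + 1))
    -- the twisted shtuka functions f^{(k)} and products s_i in F(t)
    (f : ℕ → RatFunc F)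
    (hf : ∀ k : ℕ, f k = (RatFunc.X - RatFunc.C (η ^ q ^ k))⁻¹
        - RatFunc.C ((θ ^ q ^ k - η ^ q ^ k)⁻¹))
    (s : ℕ → RatFunc F)
    (hs : ∀ i : ℕ, s i = ∏ k ∈ Finset.range i, f k) :
    RatFunc.C ℓ * RatFunc.X ^ n
        / (∏ k ∈ Finset.range N, (RatFunc.X - RatFunc.C (η ^ q ^ k)))
      = RatFunc.C ((η ^ q ^ (N - 1)) ^ n)
        * ∑ i ∈ Finset.range (N + 1), RatFunc.C (c N i * ℓ ^ q ^ i) * s i :=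
  hayes_module_factorization_general p q N hp hq F θ η hη hθη W hW u ℓ hℓq huW G hG B hB_lt hB_ge n
    hn c hc0 hcz hcs f hf s hs
end

section
/- Let j ≥ 1 and 0 ≤ n ≤ j be integers, and let (c_0, c_1, …, c_j) be the coefficient list of the twisted-polynomial product (τ + ⟪Θ⟫_{j−n}^{j−1}) ∘ ⋯ ∘ (τ + ⟪Θ⟫_{j−n}^{1}) ∘ (τ + ⟪Θ⟫_{j−n}^{0}). Then in F(t): t^n / ∏_{k=0}^{j−1} (t − η^{q^k}) = (η^{q^{j−1}})^{n} · (∏_{m=0}^{j−1} (θ − η^{q^{j−1−m}})^{−q^m}) · (θ − η)^{W_j} · ∑_{i=0}^{j} c_i · s_i(t). (Via the Anderson-motive definition a · s_0 = Ψ_a s_0 with τ^i s_0 = s_i, this computes the action of t^n/∏_{k<j}(t − η^{q^k}) on the generator s_0 of the Anderson motive of the standard Drinfeld module Ψ.) -/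
open scoped nonZeroDivisors Polynomial


/-- Action of `t^n/∏_{k<j}(t-η^{q^k})` on the generator of the
Anderson motive of the standard Drinfeld module: with `(c_0,…,c_j)` the coefficient
list of `(τ + ⟪Θ⟫_{j-n}^{j-1}) ∘ ⋯ ∘ (τ + ⟪Θ⟫_{j-n}^{0})`, one has in `F(t)`:
`t^n/∏_{k<j}(t-η^{q^k}) = (η^{q^{j-1}})^n · (∏_{m<j}(θ-η^{q^{j-1-m}})^{-q^m}) · (θ-η)^{W_j}
· ∑_{i≤j} c_i·s_i(t)`. -/
theorem anderson_motive_ideal_action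
    (p q N : ℕ) (hp : Nat.Prime p) (hq : ∃ e : ℕ, 0 < e ∧ q = p ^ e)
    (hN : 2 ≤ N)
    (F : Type*) [Field F] [CharP F p]
    (θ η : F) (hη : η ≠ 0) (hper : η ^ q ^ N = η)
    (hθη : ∀ a b : ℕ, θ ^ q ^ a ≠ η ^ q ^ b)
    (hθ : ∀ m : ℕ, 1 ≤ m → θ ^ q ^ m ≠ θ)
    (W : ℕ → ℕ) (hW : ∀ i, W i = (q ^ i - 1) / (q - 1))
    -- G_i = ∏_{m<i} (θ - η^{q^{i-1-m}})^{(q-1)·q^m}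
    (G : ℕ → F)
    (hG : ∀ i : ℕ, G i = ∏ m ∈ Finset.range i,
      (θ - η ^ q ^ (i - 1 - m)) ^ ((q - 1) * q ^ m))
    -- ⟪Θ⟫_l^i
    (Th : ℕ → ℕ → F)
    (hTh_lt : ∀ l i : ℕ, i < l → Th l i = G i * ((θ - η) ^ q ^ i)⁻¹)
    (hTh_ge : ∀ l i : ℕ, l ≤ i → Th l i
      = θ * (η ^ (q ^ (i - 1) * (q - 1) * (i - l) + q ^ i))⁻¹
        * G i * ((θ - η) ^ q ^ i)⁻¹)
    (j n : ℕ) (hj : 1 ≤ j) (hn : n ≤ j)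
    -- coefficient lists of the iterated twisted-polynomial products
    -- (τ + a_{m-1}) ∘ ⋯ ∘ (τ + a_0) with a_i = ⟪Θ⟫_{j-n}^i
    (c : ℕ → ℕ → F)
    (hc0 : ∀ i : ℕ, c 0 i = if i = 0 then 1 else 0)
    (hcz : ∀ m : ℕ, c (m + 1) 0 = Th (j - n) m * c m 0)
    (hcs : ∀ m i : ℕ, c (m + 1) (i + 1) = (c m i) ^ q + Th (j - n) m * c m (i + 1))
    -- the twisted shtuka functions f^{(k)} and products s_i in F(t)
    (f : ℕ → RatFunc F)
    (hf : ∀ k : ℕ, f k = (RatFunc.X - RatFunc.C (η ^ q ^ k))⁻¹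
        - RatFunc.C ((θ ^ q ^ k - η ^ q ^ k)⁻¹))
    (s : ℕ → RatFunc F)
    (hs : ∀ i : ℕ, s i = ∏ k ∈ Finset.range i, f k) :
    RatFunc.X ^ n / (∏ k ∈ Finset.range j, (RatFunc.X - RatFunc.C (η ^ q ^ k)))
      = RatFunc.C ((η ^ q ^ (j - 1)) ^ n
            * (∏ m ∈ Finset.range j, ((θ - η ^ q ^ (j - 1 - m)) ^ q ^ m)⁻¹)
            * (θ - η) ^ W j)
        * ∑ i ∈ Finset.range (j + 1), RatFunc.C (c j i) * s i := by
  obtain ⟨e, he, hqe⟩ := hq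
  haveI := Fact.mk hp
  set l := j - n with hldef
  -- basic numeric facts
  have hq2 : 2 ≤ q := by
    calc 2 ≤ p := hp.two_le
    _ ≤ p ^ e := Nat.le_self_pow he.ne' p
    _ = q := hqe.symm
  have hq1 : 1 ≤ q := le_trans (by norm_num) hq2
  -- nonzero scalars
  have hθb : ∀ b : ℕ, θ - η ^ q ^ b ≠ 0 := by
    intro b
    have := hθη 0 b
    rw [pow_zero, pow_one] at this
    exact sub_ne_zero.mpr this
  have hθη' : θ - η ≠ 0 := by
    have := hθη 0 0
    rw [pow_zero, pow_one, pow_one] at this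
    exact sub_ne_zero.mpr this
  have hθqη : ∀ k : ℕ, θ ^ q ^ k - η ^ q ^ k ≠ 0 := fun k => sub_ne_zero.mpr (hθη k k)
  -- W facts
  have hWq : ∀ m : ℕ, (q - 1) * W m + 1 = q ^ m := by
    intro m
    have hdvd : (q - 1) ∣ (q ^ m - 1) := by
      simpa using Nat.sub_dvd_pow_sub_pow q 1 m
    rw [hW m, Nat.mul_div_cancel' hdvd, Nat.sub_add_cancel (Nat.one_le_pow _ _ (by omega))]
  have hW0 : W 0 = 0 := by
    have h := hWq 0
    rw [pow_zero] at h
    have h2 : (q - 1) * W 0 = 0 := by exact Nat.add_right_cancel h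
    rcases Nat.mul_eq_zero.mp h2 with h3 | h3
    · omega
    · exact h3
  obtain ⟨r, hr, hr1⟩ : ∃ r, q = r + 1 ∧ 1 ≤ r := ⟨q - 1, by omega, by omega⟩
  have hWq' : ∀ m : ℕ, q * W m + 1 = q ^ m + W m := by
    intro m
    have h1 := hWq m
    rw [hr, Nat.add_sub_cancel] at h1
    rw [hr, ← h1]
    ring
  have hW1 : ∀ m : ℕ, W (m + 1) = q ^ m + W m := by
    intro m
    have h1 := hWq m
    have h2 := hWq (m + 1)
    rw [hr, Nat.add_sub_cancel] at h1 h2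
    have h4 : r * ((r + 1) ^ m + W m) + 1 = (r + 1) ^ (m + 1) := by
      calc r * ((r + 1) ^ m + W m) + 1 = r * (r + 1) ^ m + (r * W m + 1) := by ring
        _ = r * (r + 1) ^ m + (r + 1) ^ m := by rw [h1]
        _ = (r + 1) ^ (m + 1) := by ring
    have h5 : r * W (m + 1) = r * ((r + 1) ^ m + W m) :=
      Nat.add_right_cancel (h2.trans h4.symm)
    have := Nat.eq_of_mul_eq_mul_left (by omega : 0 < r) h5
    rw [hr]
    exact this
  -- the scalar product P
  set P : ℕ → F := fun m => ∏ k ∈ Finset.range m, (θ - η ^ q ^ (m - 1 - k)) ^ q ^ k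
    with hPdef
  have hPne : ∀ m : ℕ, P m ≠ 0 := by
    intro m
    exact Finset.prod_ne_zero_iff.mpr fun k _ => pow_ne_zero _ (hθb _)
  have hPs : ∀ m : ℕ, P (m + 1) = (θ - η ^ q ^ m) * P m ^ q := by
    intro m
    simp only [hPdef]
    rw [Finset.prod_range_succ', ← Finset.prod_pow, mul_comm]
    congr 1
    · simp
    · apply Finset.prod_congr rfl
      intro k _
      have hidx : m + 1 - 1 - (k + 1) = m - 1 - k := by omega
      rw [hidx, ← pow_mul, ← pow_succ]
  have hGP : ∀ m : ℕ, G m = P m ^ (q - 1) := by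
    intro m
    rw [hG]
    simp only [hPdef]
    rw [← Finset.prod_pow]
    apply Finset.prod_congr rfl
    intro k _
    rw [← pow_mul, mul_comm (q - 1)]
  -- the scalar A
  set A : ℕ → F := fun m => (η ^ q ^ (m - 1)) ^ (m - l) * (θ - η) ^ W m with hAdef
  have hAne : ∀ m : ℕ, A m ≠ 0 := fun m =>
    mul_ne_zero (pow_ne_zero _ (pow_ne_zero _ hη)) (pow_ne_zero _ hθη')
  -- Frobenius lift
  set σF : F →+* F := iterateFrobenius F p e with hσF
  have hσ : ∀ x : F, σF x = x ^ q := by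
    intro x; rw [hσF, iterateFrobenius_def, hqe]
  set ψ : F[X] →+* RatFunc F :=
    (algebraMap F[X] (RatFunc F)).comp (Polynomial.mapRingHom σF) with hψ
  have hψi : Function.Injective ψ :=
    (RatFunc.algebraMap_injective F).comp
      (Polynomial.map_injective σF σF.injective)
  have hcond : F[X]⁰ ≤ (RatFunc F)⁰.comap ψ := by
    intro g hg
    simp only [Submonoid.mem_comap]
    rw [mem_nonZeroDivisors_iff_ne_zero] at hg ⊢
    intro h; exact hg (hψi (by simpa using h))
  set Φ : RatFunc F →+* RatFunc F := RatFunc.liftRingHom ψ hcond with hΦ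
  have hΦa : ∀ g : F[X], Φ (algebraMap F[X] (RatFunc F) g) = ψ g := by
    intro g
    have := RatFunc.liftRingHom_apply_div ψ hcond g 1
    simpa only [map_one, div_one] using this
  have hΦX : Φ RatFunc.X = RatFunc.X := by
    rw [← RatFunc.algebraMap_X (K := F), hΦa]
    simp [hψ, RatFunc.algebraMap_X]
  have hΦC : ∀ a : F, Φ (RatFunc.C a) = RatFunc.C (a ^ q) := by
    intro a
    rw [← RatFunc.algebraMap_C (K := F), hΦa]
    simp [hψ, hσ, RatFunc.algebraMap_C]
  -- twisting shtuka functions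
  have hΦf : ∀ k : ℕ, Φ (f k) = f (k + 1) := by
    intro k
    rw [hf k, hf (k + 1), map_sub, map_inv₀, map_sub, hΦX, hΦC, hΦC]
    have h1 : (η ^ q ^ k) ^ q = η ^ q ^ (k + 1) := by
      rw [← pow_mul, ← pow_succ]
    have h2 : ((θ ^ q ^ k - η ^ q ^ k)⁻¹) ^ q = (θ ^ q ^ (k + 1) - η ^ q ^ (k + 1))⁻¹ := by
      rw [inv_pow]
      congr 1
      rw [hqe, sub_pow_expChar_pow, ← hqe, ← pow_mul, ← pow_mul, ← pow_succ]
    rw [h1, h2]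
  have hfs : ∀ i : ℕ, f 0 * Φ (s i) = s (i + 1) := by
    intro i
    rw [hs i, hs (i + 1), map_prod, Finset.prod_range_succ', mul_comm]
    congr 1
    exact Finset.prod_congr rfl fun k _ => hΦf k
  -- D and S
  set D : ℕ → RatFunc F := fun m => ∏ k ∈ Finset.range m,
    (RatFunc.X - RatFunc.C (η ^ q ^ k)) with hDdef
  have hXC : ∀ a : F, RatFunc.X - RatFunc.C a ≠ 0 := by
    intro a h
    have h2 : RatFunc.X = RatFunc.C a := sub_eq_zero.mp h
    rw [← RatFunc.algebraMap_X (K := F), ← RatFunc.algebraMap_C (K := F)] at h2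
    exact Polynomial.X_ne_C a (RatFunc.algebraMap_injective F h2)
  have hCne : ∀ a : F, a ≠ 0 → RatFunc.C a ≠ 0 := by
    intro a ha h
    exact ha (RatFunc.C.injective (h.trans (map_zero RatFunc.C).symm))
  have hDne : ∀ m : ℕ, D m ≠ 0 := by
    intro m
    simp only [hDdef]
    exact Finset.prod_ne_zero_iff.mpr fun k _ => hXC _
  have hDs : ∀ m : ℕ, D (m + 1) = D m * (RatFunc.X - RatFunc.C (η ^ q ^ m)) := by
    intro m; rw [hDdef]; exact Finset.prod_range_succ _ m
  have hDs' : ∀ m : ℕ, (RatFunc.X - RatFunc.C η) * Φ (D m) = D (m + 1) := by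
    intro m
    simp only [hDdef]
    rw [map_prod, Finset.prod_range_succ', mul_comm]
    congr 1
    · apply Finset.prod_congr rfl
      intro k _
      rw [map_sub, hΦX, hΦC, ← pow_mul, ← pow_succ]
    · simp
  have hf0 : (RatFunc.X - RatFunc.C η) * f 0
      = RatFunc.C ((θ - η)⁻¹) * (RatFunc.C θ - RatFunc.X) := by
    rw [hf 0]
    simp only [pow_zero, pow_one]
    rw [mul_sub, mul_inv_cancel₀ (hXC _), map_inv₀]
    have hC2 : RatFunc.C θ - RatFunc.C η ≠ 0 := by
      rw [← map_sub]; exact hCne _ hθη'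
    rw [map_sub]
    field_simp
    ring
  set S : ℕ → RatFunc F := fun m => ∑ i ∈ Finset.range (m + 1), RatFunc.C (c m i) * s i
    with hSdef
  have hczero : ∀ m i : ℕ, m < i → c m i = 0 := by
    intro m
    induction m with
    | zero =>
      intro i hi
      rw [hc0]
      exact if_neg (by omega)
    | succ m IH =>
      intro i hi
      match i, hi with
      | i + 1, hi =>
        rw [hcs, IH i (by omega), IH (i + 1) (by omega)]
        simp [zero_pow (by omega : q ≠ 0)]
  have hSrec : ∀ m : ℕ, S (m + 1) = RatFunc.C (Th l m) * S m + f 0 * Φ (S m) := by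
    intro m
    have hSm' : S m = (∑ i ∈ Finset.range (m + 1), RatFunc.C (c m (i + 1)) * s (i + 1))
        + RatFunc.C (c m 0) * s 0 := by
      have h := Finset.sum_range_succ' (fun i => RatFunc.C (c m i) * s i) (m + 1)
      rw [Finset.sum_range_succ, hczero m (m + 1) (by omega)] at h
      simp only [map_zero, zero_mul, add_zero] at h
      simpa only [hSdef] using h
    have hΦS : Φ (S m) = ∑ i ∈ Finset.range (m + 1), RatFunc.C ((c m i) ^ q) * Φ (s i) := by
      simp only [hSdef, map_sum, map_mul, hΦC]
    calc S (m + 1)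
        = ∑ i ∈ Finset.range (m + 1), RatFunc.C (c (m + 1) (i + 1)) * s (i + 1)
          + RatFunc.C (c (m + 1) 0) * s 0 := by
          simp only [hSdef]
          exact Finset.sum_range_succ' _ (m + 1)
      _ = ∑ i ∈ Finset.range (m + 1),
            (RatFunc.C (Th l m) * (RatFunc.C (c m (i + 1)) * s (i + 1))
              + RatFunc.C ((c m i) ^ q) * s (i + 1))
          + RatFunc.C (Th l m) * (RatFunc.C (c m 0) * s 0) := by
          rw [hcz]
          congr 1
          · apply Finset.sum_congr rfl
            intro i _
            rw [hcs, map_add, map_mul]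
            ring
          · rw [map_mul]; ring
      _ = RatFunc.C (Th l m) * S m
          + ∑ i ∈ Finset.range (m + 1), RatFunc.C ((c m i) ^ q) * s (i + 1) := by
          rw [Finset.sum_add_distrib, hSm', mul_add, Finset.mul_sum]
          ring
      _ = RatFunc.C (Th l m) * S m + f 0 * Φ (S m) := by
          rw [hΦS]
          congr 1
          rw [Finset.mul_sum]
          exact Finset.sum_congr rfl fun i _ => by rw [← hfs i]; ring
  -- auxiliary power facts
  have e1 : ∀ m : ℕ, P m ^ (q - 1) * P m = P m ^ q := by
    intro m
    rw [← pow_succ, Nat.sub_add_cancel hq1]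
  have epow : ∀ m : ℕ, (θ - η) ^ (q ^ m + W m) = (θ - η) * (θ - η) ^ (W m * q) := by
    intro m
    rw [← pow_succ']
    congr 1
    rw [mul_comm]
    exact (hWq' m).symm
  have hK2 : ∀ m : ℕ, l ≤ m → q ^ (m - 1) * (m - l) * q = q ^ m * (m - l) := by
    intro m
    rcases m with _ | m'
    · intro hlm
      have hl0 : l = 0 := by omega
      simp [hl0]
    · intro _
      simp only [Nat.add_sub_cancel]
      rw [pow_succ]
      ring
  have hK1 : ∀ m : ℕ, l ≤ m →
      q ^ (m - 1) * (q - 1) * (m - l) + q ^ m + q ^ (m - 1) * (m - l)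
        = q ^ m * (m - l) + q ^ m := by
    intro m
    rcases m with _ | m'
    · intro hlm
      have hl0 : l = 0 := by omega
      simp [hl0]
    · intro _
      rw [hr]
      simp only [Nat.add_sub_cancel]
      ring
  -- main induction
  have key : ∀ m : ℕ, RatFunc.X ^ (m - l) * RatFunc.C (P m)
      = RatFunc.C (A m) * (D m * S m) := by
    intro m
    induction m with
    | zero =>
      simp [hPdef, hAdef, hDdef, hSdef, hW0, hc0, hs]
    | succ m IH =>
      have hCAm : RatFunc.C (A m) ≠ 0 := hCne _ (hAne m)
      have hCAmq : RatFunc.C (A m ^ q) ≠ 0 := hCne _ (pow_ne_zero _ (hAne m))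
      have hDS : (RatFunc.C (A m))⁻¹ * (RatFunc.X ^ (m - l) * RatFunc.C (P m)) = D m * S m := by
        rw [IH, inv_mul_cancel_left₀ hCAm]
      have IHt : RatFunc.X ^ (m - l) * RatFunc.C (P m ^ q)
          = RatFunc.C (A m ^ q) * (Φ (D m) * Φ (S m)) := by
        have h := congrArg Φ IH
        simp only [map_mul] at h
        rw [map_pow, hΦX, hΦC (P m), hΦC (A m)] at h
        exact h
      have hDSt : (RatFunc.C (A m ^ q))⁻¹ * (RatFunc.X ^ (m - l) * RatFunc.C (P m ^ q))
          = Φ (D m) * Φ (S m) := by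
        rw [IHt, inv_mul_cancel_left₀ hCAmq]
      have hT1 : D (m + 1) * (RatFunc.C (Th l m) * S m)
          = RatFunc.C (Th l m) * ((RatFunc.X - RatFunc.C (η ^ q ^ m)) * (D m * S m)) := by
        rw [hDs m]; ring
      have hT2 : D (m + 1) * (f 0 * Φ (S m))
          = ((RatFunc.X - RatFunc.C η) * f 0) * (Φ (D m) * Φ (S m)) := by
        rw [← hDs' m]; ring
      have hmain : D (m + 1) * S (m + 1)
          = RatFunc.C (Th l m) * ((RatFunc.X - RatFunc.C (η ^ q ^ m))
              * ((RatFunc.C (A m))⁻¹ * (RatFunc.X ^ (m - l) * RatFunc.C (P m))))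
            + (RatFunc.C ((θ - η)⁻¹) * (RatFunc.C θ - RatFunc.X))
              * ((RatFunc.C (A m ^ q))⁻¹ * (RatFunc.X ^ (m - l) * RatFunc.C (P m ^ q))) := by
        rw [hSrec m, mul_add, hT1, hT2, hDS, hDSt, hf0]
      rw [hmain]
      rcases le_or_gt l m with hlm | hlm
      · -- case B : l ≤ m
        have hd : m + 1 - l = (m - l) + 1 := by omega
        have hAmB : A m = η ^ (q ^ (m - 1) * (m - l)) * (θ - η) ^ W m := by
          simp only [hAdef]
          rw [← pow_mul]
        have hAmqB : A m ^ q = η ^ (q ^ m * (m - l)) * (θ - η) ^ (W m * q) := by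
          rw [hAmB, mul_pow, ← pow_mul, ← pow_mul, hK2 m hlm]
        have hA1B : A (m + 1)
            = η ^ (q ^ m * (m - l) + q ^ m) * (θ - η) ^ (q ^ m + W m) := by
          simp only [hAdef]
          rw [Nat.add_sub_cancel, hd, ← pow_mul, hW1 m]
          have hexp : q ^ m * (m - l + 1) = q ^ m * (m - l) + q ^ m := by ring
          rw [hexp]
        have hv : Th l m * (A m)⁻¹ * P m
            = θ * P m ^ q * (η ^ (q ^ m * (m - l) + q ^ m))⁻¹
              * ((θ - η) ^ (q ^ m + W m))⁻¹ := by
          rw [hTh_ge l m hlm, hGP m, hAmB, mul_inv, ← hK1 m hlm]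
          rw [pow_add η, mul_inv, pow_add (θ - η), mul_inv, ← e1 m]
          ring
        have hw : (θ - η)⁻¹ * (A m ^ q)⁻¹ * P m ^ q
            = P m ^ q * (η ^ (q ^ m * (m - l)))⁻¹ * ((θ - η) ^ (q ^ m + W m))⁻¹ := by
          rw [hAmqB, mul_inv, epow m, mul_inv]
          ring
        have hηa : ∀ a : ℕ, η ^ a ≠ 0 := fun a => pow_ne_zero a hη
        have hta : ∀ a : ℕ, (θ - η) ^ a ≠ 0 := fun a => pow_ne_zero a hθη'
        have sE1 : η ^ q ^ m * (Th l m * (A m)⁻¹ * P m)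
            = θ * ((θ - η)⁻¹ * (A m ^ q)⁻¹ * P m ^ q) := by
          rw [hv, hw, pow_add η, mul_inv]
          field_simp
        have sE2 : A (m + 1) * (Th l m * (A m)⁻¹ * P m - (θ - η)⁻¹ * (A m ^ q)⁻¹ * P m ^ q)
            = P (m + 1) := by
          rw [hv, hw, hA1B, hPs m]
          field_simp
          ring
        have kE1 : RatFunc.C (η ^ q ^ m) * (RatFunc.C (Th l m) * (RatFunc.C (A m))⁻¹ * RatFunc.C (P m))
            = RatFunc.C θ * (RatFunc.C ((θ - η)⁻¹) * (RatFunc.C (A m ^ q))⁻¹ * RatFunc.C (P m ^ q)) := by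
          have h := congrArg RatFunc.C sE1
          simpa only [map_mul, map_inv₀] using h
        have kE2 : RatFunc.C (A (m + 1)) * (RatFunc.C (Th l m) * (RatFunc.C (A m))⁻¹ * RatFunc.C (P m)
              - RatFunc.C ((θ - η)⁻¹) * (RatFunc.C (A m ^ q))⁻¹ * RatFunc.C (P m ^ q))
            = RatFunc.C (P (m + 1)) := by
          have h := congrArg RatFunc.C sE2
          simpa only [map_mul, map_sub, map_inv₀] using h
        rw [hd, pow_succ]
        linear_combination (-(RatFunc.X ^ (m - l) * RatFunc.X)) * kE2
          + (RatFunc.C (A (m + 1)) * RatFunc.X ^ (m - l)) * kE1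
      · -- case A : m < l
        have h0 : m - l = 0 := by omega
        have h1 : m + 1 - l = 0 := by omega
        have hAmv : A m = (θ - η) ^ W m := by
          simp only [hAdef]
          rw [h0, pow_zero, one_mul]
        have hAm1v : A (m + 1) = (θ - η) ^ W (m + 1) := by
          simp only [hAdef]
          rw [h1, pow_zero, one_mul]
        have hL : Th l m * (A m)⁻¹ * P m = P m ^ q * ((θ - η) ^ (q ^ m + W m))⁻¹ := by
          rw [hTh_lt l m hlm, hGP m, hAmv, pow_add, mul_inv, ← e1 m]
          ring
        have hR : (θ - η)⁻¹ * (A m ^ q)⁻¹ * P m ^ q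
            = P m ^ q * ((θ - η) ^ (q ^ m + W m))⁻¹ := by
          rw [hAmv, ← pow_mul, epow m, mul_inv]
          ring
        have sA1 : Th l m * (A m)⁻¹ * P m = (θ - η)⁻¹ * (A m ^ q)⁻¹ * P m ^ q :=
          hL.trans hR.symm
        have sA2 : A (m + 1) * (Th l m * (A m)⁻¹ * P m) * (θ - η ^ q ^ m) = P (m + 1) := by
          rw [hL, hAm1v, hPs m, hW1 m]
          have hne : (θ - η) ^ (q ^ m + W m) ≠ 0 := pow_ne_zero _ hθη'
          field_simp
        have kA1 : RatFunc.C (Th l m) * (RatFunc.C (A m))⁻¹ * RatFunc.C (P m)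
            = RatFunc.C ((θ - η)⁻¹) * (RatFunc.C (A m ^ q))⁻¹ * RatFunc.C (P m ^ q) := by
          have h := congrArg RatFunc.C sA1
          simpa only [map_mul, map_inv₀] using h
        have kA2 : RatFunc.C (A (m + 1)) * (RatFunc.C (Th l m) * (RatFunc.C (A m))⁻¹ * RatFunc.C (P m))
              * (RatFunc.C θ - RatFunc.C (η ^ q ^ m))
            = RatFunc.C (P (m + 1)) := by
          have h := congrArg RatFunc.C sA2
          simpa only [map_mul, map_sub, map_inv₀] using h
        rw [h0, h1, pow_zero]
        linear_combination (-1 : RatFunc F) * kA2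
          + (RatFunc.C (A (m + 1)) * (RatFunc.C θ - RatFunc.X)) * kA1
  -- conclusion
  have hkj := key j
  have hnl : j - l = n := by omega
  rw [hnl] at hkj
  have hPinv : (∏ m ∈ Finset.range j, ((θ - η ^ q ^ (j - 1 - m)) ^ q ^ m)⁻¹) = (P j)⁻¹ := by
    rw [hPdef, ← Finset.prod_inv_distrib]
  have hAj : A j = (η ^ q ^ (j - 1)) ^ n * (θ - η) ^ W j := by
    simp only [hAdef]
    rw [hnl]
  have hCP : RatFunc.C (P j) ≠ 0 := hCne _ (hPne j)
  have h2 : RatFunc.C ((η ^ q ^ (j - 1)) ^ n * (P j)⁻¹ * (θ - η) ^ W j)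
      = RatFunc.C (A j) * (RatFunc.C (P j))⁻¹ := by
    rw [map_mul, map_mul, map_inv₀, hAj, map_mul]
    ring
  rw [hPinv, h2]
  have hDj : (∏ k ∈ Finset.range j, (RatFunc.X - RatFunc.C (η ^ q ^ k))) = D j := by
    rw [hDdef]
  have hSj : (∑ i ∈ Finset.range (j + 1), RatFunc.C (c j i) * s i) = S j := by
    rw [hSdef]
  rw [hDj, hSj, div_eq_iff (hDne j)]
  field_simp
  linear_combination hkj
end

section
/- For every integer n ≥ 1, the identity 1/(D_{n−1}^q · Q_{n−1}^{(1)}(z)) = f(z)/(D_n · Q_n(z)) + 1/D_n^Φ holds in the field of rational functions F(z); moreover f(z)/(D_0 · Q_0(z)) + 1/D_0^Φ = 0. (These are precisely the coefficient identities, for each power U^{q^n}, of the Frobenius difference equation τ ⋄ G(U;𝔱) = f(𝔱)·G(U;𝔱) + exp_Φ(U) satisfied by the Pellarin-type generating function G(U;𝔱) = ∑_{n≥0} U^{q^n}/(D_n Q_n(𝔱)), where exp_Φ(U) = ∑_{n≥0} U^{q^n}/D_n^Φ is the exponential of the dual Drinfeld module Φ.) -/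
set_option maxHeartbeats 1000000 in
lemma pell_key1 {K : Type*} [Field K] (z t e eq P S Dmq Dn DΦn : K)
    (hS : S ≠ 0) (hte : t - e ≠ 0) (hPe : P - e ≠ 0) (hPeq : P - eq ≠ 0)
    (hteq : t - eq ≠ 0) (hDmq : Dmq ≠ 0) (hDn : Dn ≠ 0)
    (hze : z - e ≠ 0) (hzeq : z - eq ≠ 0) (hzP : z - P ≠ 0)
    (hrec : Dn * ((P - e) * (t - e)) = Dmq * (t - P))
    (hDΦ : DΦn = ((t - e) / (t - eq)) * Dn * (S ^ 2)⁻¹ * (P - e) * (P - eq)) :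
    (Dmq * (((P - eq) / S) ^ 2 * ((P - eq)⁻¹ - (z - eq)⁻¹)))⁻¹
      = ((z - e)⁻¹ - (t - e)⁻¹)
          * (Dn * (((P - e) / S) ^ 2 * ((P - e)⁻¹ - (z - e)⁻¹)))⁻¹ + DΦn⁻¹ := by
  have hS2 : S ^ 2 ≠ 0 := pow_ne_zero _ hS
  have htP : t - P ≠ 0 := by
    intro h
    apply hDn
    have := hrec
    rw [h, mul_zero] at this
    exact (mul_eq_zero.mp this).resolve_right (mul_ne_zero hPe hte)
  have h1 : (P - eq)⁻¹ - (z - eq)⁻¹ = (z - P) / ((P - eq) * (z - eq)) := by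
    field_simp; ring
  have h2 : (P - e)⁻¹ - (z - e)⁻¹ = (z - P) / ((P - e) * (z - e)) := by
    field_simp; ring
  have h3 : (z - e)⁻¹ - (t - e)⁻¹ = (t - z) / ((z - e) * (t - e)) := by
    field_simp; ring
  have hL' : Dmq * (((P - eq) / S) ^ 2 * ((z - P) / ((P - eq) * (z - eq))))
      = Dmq * (P - eq) * (z - P) / (S ^ 2 * (z - eq)) := by
    field_simp
  have hR' : Dn * (((P - e) / S) ^ 2 * ((z - P) / ((P - e) * (z - e))))
      = Dn * (P - e) * (z - P) / (S ^ 2 * (z - e)) := by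
    field_simp
  have hΦ' : DΦn = Dn * (P - e) * (t - e) * (P - eq) / (S ^ 2 * (t - eq)) := by
    rw [hDΦ]; field_simp
  have hb : ((z - e) * (t - e)) * (Dn * (P - e) * (z - P)) ≠ 0 :=
    mul_ne_zero (mul_ne_zero hze hte) (mul_ne_zero (mul_ne_zero hDn hPe) hzP)
  have hd : Dn * (P - e) * (t - e) * (P - eq) ≠ 0 :=
    mul_ne_zero (mul_ne_zero (mul_ne_zero hDn hPe) hte) hPeq
  rw [h1, h2, h3, hL', hR', hΦ', inv_div, inv_div, inv_div,
    div_mul_div_comm, div_add_div _ _ hb hd,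
    div_eq_div_iff (mul_ne_zero (mul_ne_zero hDmq hPeq) hzP) (mul_ne_zero hb hd)]
  linear_combination (S^2*(z-e)*(t-e)*Dn*(P-e)*(z-eq)*(z-P)*(P-eq)) * hrec

lemma pell_key0 {K : Type*} [Field K] (z t e : K)
    (hze : z - e ≠ 0) (hte : t - e ≠ 0) (hzt : z - t ≠ 0) :
    ((z - e)⁻¹ - (t - e)⁻¹) * (1 * (((t - e) / (t - e)) ^ 2 * ((t - e)⁻¹ - (z - e)⁻¹)))⁻¹ + 1 = 0 := by
  have h3 : (z - e)⁻¹ - (t - e)⁻¹ = (t - z) / ((z - e) * (t - e)) := by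
    field_simp; ring
  have h2 : (t - e)⁻¹ - (z - e)⁻¹ = (z - t) / ((t - e) * (z - e)) := by
    field_simp; ring
  rw [h2, h3, div_self hte, one_mul, one_pow, one_mul, inv_div, div_mul_div_comm]
  rw [div_add' _ _ _ (mul_ne_zero (mul_ne_zero hze hte) hzt), div_eq_zero_iff]
  left; ring



/-- The coefficient identities (for each power `U^{q^n}`) of the
Frobenius difference equation `τ ⋄ G(U;𝔱) = f(𝔱)·G(U;𝔱) + exp_Φ(U)` satisfied by the
Pellarin-type generating function:
for `n ≥ 1`, `1/(D_{n-1}^q·Q_{n-1}^{(1)}(z)) = f(z)/(D_n·Q_n(z)) + 1/D_n^Φ`, and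
`f(z)/(D_0·Q_0(z)) + 1/D_0^Φ = 0`. -/
theorem pellarin_generating_function_coefficient_identity
    (p q N : ℕ) (hp : Nat.Prime p) (hq : ∃ e : ℕ, 0 < e ∧ q = p ^ e)
    (hN : 2 ≤ N)
    (F : Type*) [Field F] [CharP F p]
    (θ η : F) (hη : η ≠ 0) (hper : η ^ q ^ N = η)
    (hθη : ∀ a b : ℕ, θ ^ q ^ a ≠ η ^ q ^ b)
    (hθ : ∀ m : ℕ, 1 ≤ m → θ ^ q ^ m ≠ θ)
    (D : ℕ → F) (hD0 : D 0 = 1)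
    (hDrec : ∀ i : ℕ, D (i + 1)
      = D i ^ q * (θ - θ ^ q ^ (i + 1)) / ((θ ^ q ^ (i + 1) - η) * (θ - η)))
    -- the shtuka function f(z) in F(z)
    (fR : RatFunc F)
    (hfR : fR = (RatFunc.X - RatFunc.C η)⁻¹ - RatFunc.C ((θ - η)⁻¹))
    -- Q_n(z) and its coefficient twist Q_n^{(1)}(z)
    (Q : ℕ → RatFunc F)
    (hQ : ∀ n : ℕ, Q n
      = RatFunc.C (((θ ^ q ^ n - η) / (θ - η) ^ q ^ n) ^ 2)
        * (RatFunc.C ((θ ^ q ^ n - η)⁻¹) - (RatFunc.X - RatFunc.C η)⁻¹))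
    (Qtw : ℕ → RatFunc F)
    (hQtw : ∀ n : ℕ, Qtw n
      = RatFunc.C (((θ ^ q ^ (n + 1) - η ^ q) / (θ - η) ^ q ^ (n + 1)) ^ 2)
        * (RatFunc.C ((θ ^ q ^ (n + 1) - η ^ q)⁻¹)
            - (RatFunc.X - RatFunc.C (η ^ q))⁻¹))
    -- the exponential coefficients of the dual Drinfeld module Φ
    (DΦ : ℕ → F)
    (hDΦ : ∀ n : ℕ, DΦ n
      = ((θ - η) / (θ - η ^ q)) * D n * ((θ - η) ^ (2 * q ^ n))⁻¹
        * (θ ^ q ^ n - η) * (θ ^ q ^ n - η ^ q)) :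
    (∀ n : ℕ, 1 ≤ n →
      (RatFunc.C (D (n - 1) ^ q) * Qtw (n - 1))⁻¹
        = fR * (RatFunc.C (D n) * Q n)⁻¹ + RatFunc.C ((DΦ n)⁻¹))
    ∧ fR * (RatFunc.C (D 0) * Q 0)⁻¹ + RatFunc.C ((DΦ 0)⁻¹) = 0 := by
  -- basic nonvanishing facts in F
  have hte : θ - η ≠ 0 := sub_ne_zero.mpr (by simpa using hθη 0 0)
  have hPe : ∀ n : ℕ, θ ^ q ^ n - η ≠ 0 := fun n =>
    sub_ne_zero.mpr (by simpa using hθη n 0)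
  have hPeq : ∀ n : ℕ, θ ^ q ^ n - η ^ q ≠ 0 := fun n =>
    sub_ne_zero.mpr (by simpa using hθη n 1)
  have hteq : θ - η ^ q ≠ 0 := sub_ne_zero.mpr (by simpa using hθη 0 1)
  have hqpos : 0 < q := by
    obtain ⟨e, he, rfl⟩ := hq
    exact pow_pos hp.pos e
  have hDne : ∀ n : ℕ, D n ≠ 0 := by
    intro n
    induction n with
    | zero => rw [hD0]; exact one_ne_zero
    | succ i ih =>
      rw [hDrec i]
      exact div_ne_zero
        (mul_ne_zero (pow_ne_zero _ ih)
          (sub_ne_zero.mpr (Ne.symm (hθ (i + 1) (by omega)))))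
        (mul_ne_zero (hPe (i + 1)) hte)
  have hrecF : ∀ m : ℕ, D (m + 1) * ((θ ^ q ^ (m + 1) - η) * (θ - η))
      = D m ^ q * (θ - θ ^ q ^ (m + 1)) := fun m =>
    ((div_eq_iff (mul_ne_zero (hPe (m + 1)) hte)).mp (hDrec m).symm).symm
  have hCne : ∀ x : F, x ≠ 0 → RatFunc.C x ≠ 0 := fun x hx => by
    simpa using (map_ne_zero RatFunc.C).mpr hx
  have hXC : ∀ a : F, RatFunc.X - RatFunc.C a ≠ 0 := by
    intro a
    have h : RatFunc.X - RatFunc.C a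
        = algebraMap (Polynomial F) (RatFunc F) (Polynomial.X - Polynomial.C a) := by
      simp [map_sub, RatFunc.algebraMap_X, RatFunc.algebraMap_C]
    rw [h]
    exact RatFunc.algebraMap_ne_zero (Polynomial.X_sub_C_ne_zero a)
  constructor
  · intro n hn
    obtain ⟨m, rfl⟩ : ∃ m, n = m + 1 := ⟨n - 1, by omega⟩
    simp only [Nat.add_sub_cancel]
    rw [hQtw m, hQ (m + 1), hfR]
    simp only [hDΦ, map_mul, map_div₀, map_pow, map_sub, map_inv₀]
    rw [show 2 * q ^ (m + 1) = q ^ (m + 1) * 2 by ring, pow_mul]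
    have hteC : RatFunc.C θ - RatFunc.C η ≠ 0 := by
      rw [← map_sub]; exact hCne _ hte
    have hPeC : RatFunc.C θ ^ q ^ (m + 1) - RatFunc.C η ≠ 0 := by
      rw [← map_pow, ← map_sub]; exact hCne _ (hPe (m + 1))
    have hPeqC : RatFunc.C θ ^ q ^ (m + 1) - RatFunc.C η ^ q ≠ 0 := by
      rw [← map_pow, ← map_pow, ← map_sub]; exact hCne _ (hPeq (m + 1))
    have hteqC : RatFunc.C θ - RatFunc.C η ^ q ≠ 0 := by
      rw [← map_pow, ← map_sub]; exact hCne _ hteq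
    have hrecC : RatFunc.C (D (m + 1))
        * ((RatFunc.C θ ^ q ^ (m + 1) - RatFunc.C η) * (RatFunc.C θ - RatFunc.C η))
        = RatFunc.C (D m) ^ q * (RatFunc.C θ - RatFunc.C θ ^ q ^ (m + 1)) := by
      have := congrArg RatFunc.C (hrecF m)
      simpa only [map_mul, map_sub, map_pow] using this
    exact pell_key1 RatFunc.X (RatFunc.C θ) (RatFunc.C η) (RatFunc.C η ^ q)
      (RatFunc.C θ ^ q ^ (m + 1)) ((RatFunc.C θ - RatFunc.C η) ^ q ^ (m + 1))
      (RatFunc.C (D m) ^ q) (RatFunc.C (D (m + 1))) _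
      (pow_ne_zero _ hteC) hteC hPeC hPeqC hteqC
      (pow_ne_zero _ (hCne _ (hDne m))) (hCne _ (hDne (m + 1)))
      (hXC η) (by rw [← map_pow]; exact hXC (η ^ q))
      (by rw [← map_pow]; exact hXC (θ ^ q ^ (m + 1)))
      hrecC rfl
  · rw [hQ 0, hfR, hD0]
    have hDΦ0 : DΦ 0 = 1 := by
      rw [hDΦ 0, hD0]
      simp only [pow_zero, pow_one, mul_one]
      field_simp
    rw [hDΦ0, inv_one]; simp only [map_one]
    simp only [pow_zero, pow_one, map_pow, map_div₀, map_sub, map_inv₀]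
    exact pell_key0 RatFunc.X (RatFunc.C θ) (RatFunc.C η) (hXC η)
      (by rw [← map_sub]; exact hCne _ hte) (hXC θ)
end

section
/- With the convention D_m^{−1} = 0 for m < 0, for every integer n ≥ 0: D_{n−2}^{−q²} + ((θ − η)^{−q} + (θ − η)^{−1})·D_{n−1}^{−q} + (θ − η)^{−2}·D_n^{−1} = ((θ − η^q)/(θ − η)) · ( D_n · (θ^{q^n} − η) · (θ^{q^n} − η^q) )^{−1}. (This is the coefficient identity, for each power U^{q^n}, of the formula (τ + Θ)² exp_{(0)}(U) = ((θ − η^q)/(θ − η)) · ∑_{n≥0} U^{q^n}/(D_n(θ^{q^n} − η)(θ^{q^n} − η^q)); it identifies the exponential of the dual Drinfeld module Φ as exp_Φ(U) = ∑_{n≥0} U^{q^n}/D_n^Φ with D_n^Φ = ((θ − η)/(θ − η^q))·D_n·(θ − η)^{−2q^n}·(θ^{q^n} − η)·(θ^{q^n} − η^q).) -/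
set_option maxHeartbeats 1600000

private lemma ddeci_key {F : Type*} [Field F] (Y θ η a b B : F)
    (hY : Y ≠ 0) (hA : θ - η ≠ 0) (hab : a - b ≠ 0) (haB : a - B ≠ 0)
    (hθB : θ - B ≠ 0) (hBη : B - η ≠ 0) (hBb : B - b ≠ 0) :
    (Y)⁻¹ + ((a - b)⁻¹ + (θ - η)⁻¹) * (Y * (a - B) / ((B - b) * (a - b)))⁻¹
      + ((θ - η) ^ 2)⁻¹
        * (Y * ((a - B) * (θ - B)) / ((B - b) * (a - b) * ((B - η) * (θ - η))))⁻¹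
    = ((θ - b) / (θ - η))
        * (Y * ((a - B) * (θ - B)) / ((B - b) * (a - b) * ((B - η) * (θ - η)))
            * (B - η) * (B - b))⁻¹ := by
  rw [mul_inv, mul_inv, inv_div, inv_div]
  field_simp
  ring



/-- With the convention `D_m⁻¹ = 0` for `m < 0`, for every `n ≥ 0`:
`D_{n-2}^{-q²} + ((θ-η)^{-q} + (θ-η)^{-1})·D_{n-1}^{-q} + (θ-η)^{-2}·D_n^{-1}
 = ((θ-η^q)/(θ-η)) · (D_n·(θ^{q^n}-η)·(θ^{q^n}-η^q))⁻¹`,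
identifying the exponential of the dual Drinfeld module `Φ`. -/
theorem dual_drinfeld_exponential_coefficient_identity
    (p q N : ℕ) (hp : Nat.Prime p) (hq : ∃ e : ℕ, 0 < e ∧ q = p ^ e)
    (hN : 2 ≤ N)
    (F : Type*) [Field F] [CharP F p]
    (θ η : F) (hη : η ≠ 0) (hper : η ^ q ^ N = η)
    (hθη : ∀ a b : ℕ, θ ^ q ^ a ≠ η ^ q ^ b)
    (hθ : ∀ m : ℕ, 1 ≤ m → θ ^ q ^ m ≠ θ)
    (D : ℕ → F) (hD0 : D 0 = 1)
    (hDrec : ∀ i : ℕ, D (i + 1)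
      = D i ^ q * (θ - θ ^ q ^ (i + 1)) / ((θ ^ q ^ (i + 1) - η) * (θ - η)))
    -- `Dinv m = D_m⁻¹` for `m ≥ 0` and `Dinv m = 0` for `m < 0`
    (Dinv : ℤ → F)
    (hDinv_neg : ∀ m : ℤ, m < 0 → Dinv m = 0)
    (hDinv_nat : ∀ m : ℕ, Dinv m = (D m)⁻¹) :
    ∀ n : ℕ,
      Dinv ((n : ℤ) - 2) ^ q ^ 2
        + (((θ - η) ^ q)⁻¹ + (θ - η)⁻¹) * Dinv ((n : ℤ) - 1) ^ q
        + ((θ - η) ^ 2)⁻¹ * Dinv n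
      = ((θ - η ^ q) / (θ - η))
          * (D n * (θ ^ q ^ n - η) * (θ ^ q ^ n - η ^ q))⁻¹ := by
  have hq0 : q ≠ 0 := by
    obtain ⟨e, he, rfl⟩ := hq
    exact pow_ne_zero e hp.pos.ne'
  have frob : ∀ x y : F, (x - y) ^ q = x ^ q - y ^ q := by
    obtain ⟨e, he, rfl⟩ := hq
    intro x y
    haveI := Fact.mk hp
    exact sub_pow_char_pow x y e
  have hA : θ - η ≠ 0 := sub_ne_zero.mpr (by simpa using hθη 0 0)
  have htη : ∀ i : ℕ, θ ^ q ^ i - η ≠ 0 := fun i =>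
    sub_ne_zero.mpr (by simpa using hθη i 0)
  have htηq : ∀ i : ℕ, θ ^ q ^ i - η ^ q ≠ 0 := fun i =>
    sub_ne_zero.mpr (by simpa using hθη i 1)
  have hθt : ∀ i : ℕ, 1 ≤ i → θ - θ ^ q ^ i ≠ 0 := fun i hi =>
    sub_ne_zero.mpr (Ne.symm (hθ i hi))
  have hDne : ∀ i, D i ≠ 0 := by
    intro i
    induction i with
    | zero => rw [hD0]; exact one_ne_zero
    | succ k ih =>
        rw [hDrec k]
        exact div_ne_zero (mul_ne_zero (pow_ne_zero _ ih) (hθt (k + 1) (by omega)))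
          (mul_ne_zero (htη (k + 1)) hA)
  have hab : θ ^ q - η ^ q ≠ 0 := by rw [← frob]; exact pow_ne_zero q hA
  intro n
  match n with
  | 0 =>
      rw [show ((0 : ℕ) : ℤ) - 2 = -2 by norm_num, hDinv_neg _ (by norm_num),
        show ((0 : ℕ) : ℤ) - 1 = -1 by norm_num, hDinv_neg _ (by norm_num),
        hDinv_nat 0, hD0]
      have h1 : θ - η ^ q ≠ 0 := by simpa using htηq 0
      simp only [pow_zero, pow_one, zero_pow hq0, zero_pow (pow_ne_zero 2 hq0)]
      field_simp
      ring
  | 1 =>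
      rw [show ((1 : ℕ) : ℤ) - 2 = -1 by norm_num, hDinv_neg _ (by norm_num),
        show ((1 : ℕ) : ℤ) - 1 = ((0 : ℕ) : ℤ) by norm_num,
        hDinv_nat 0, hDinv_nat 1, hD0, hDrec 0, hD0]
      have h1 : θ - η ^ q ≠ 0 := by simpa using htηq 0
      have h2 : θ ^ q - η ≠ 0 := by simpa using htη 1
      have h3 : θ ^ q - η ^ q ≠ 0 := by simpa using htηq 1
      have h4 : θ - θ ^ q ≠ 0 := by simpa using hθt 1 le_rfl
      simp only [zero_add, pow_one, one_pow, zero_pow (pow_ne_zero 2 hq0), inv_one, frob θ η]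
      field_simp
      ring
  | (m + 2) =>
      rw [show ((m + 2 : ℕ) : ℤ) - 2 = ((m : ℕ) : ℤ) by push_cast; ring,
        show ((m + 2 : ℕ) : ℤ) - 1 = ((m + 1 : ℕ) : ℤ) by push_cast; ring,
        hDinv_nat m, hDinv_nat (m + 1), hDinv_nat (m + 2)]
      have hBpow : (θ ^ q ^ (m + 1)) ^ q = θ ^ q ^ (m + 2) := by
        rw [← pow_mul, ← pow_succ]
      have e1 : (θ - θ ^ q ^ (m + 1)) ^ q = θ ^ q - θ ^ q ^ (m + 2) := by
        rw [frob, hBpow]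
      have e2 : (θ ^ q ^ (m + 1) - η) ^ q = θ ^ q ^ (m + 2) - η ^ q := by
        rw [frob, hBpow]
      have e3 : (θ - η) ^ q = θ ^ q - η ^ q := frob θ η
      have haB : θ ^ q - θ ^ q ^ (m + 2) ≠ 0 := by
        rw [← e1]; exact pow_ne_zero q (hθt (m + 1) (by omega))
      have hθB : θ - θ ^ q ^ (m + 2) ≠ 0 := hθt (m + 2) (by omega)
      have hBη : θ ^ q ^ (m + 2) - η ≠ 0 := htη (m + 2)
      have hBb : θ ^ q ^ (m + 2) - η ^ q ≠ 0 := by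
        rw [← e2]; exact pow_ne_zero q (htη (m + 1))
      have hθb : θ - η ^ q ≠ 0 := by simpa using htηq 0
      have hY : D m ^ q ^ 2 ≠ 0 := pow_ne_zero _ (hDne m)
      have hD1 : D (m + 1) ^ q
          = D m ^ q ^ 2 * (θ ^ q - θ ^ q ^ (m + 2))
            / ((θ ^ q ^ (m + 2) - η ^ q) * (θ ^ q - η ^ q)) := by
        rw [hDrec m, div_pow, mul_pow, e1, mul_pow, e2, e3, ← pow_mul, ← pow_two]
      have hD2 : D (m + 2)
          = D m ^ q ^ 2 * ((θ ^ q - θ ^ q ^ (m + 2)) * (θ - θ ^ q ^ (m + 2)))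
            / ((θ ^ q ^ (m + 2) - η ^ q) * (θ ^ q - η ^ q)
                * ((θ ^ q ^ (m + 2) - η) * (θ - η))) := by
        rw [hDrec (m + 1), hD1]
        field_simp
      rw [e3, hD2, inv_pow (D (m + 1)) q, hD1, inv_pow (D m)]
      exact ddeci_key _ θ η _ _ _ hY hA hab haB hθB hBη hBb
end

section
/- For all integers n ≥ 0 and j ≥ 0: D_n(η^{q^j}) = D_n(η) · ∏_{i=0}^{j−1} ( (θ − η^{q^{i−n}}) / (θ − η^{q^i}) )^{q^n} · ( (θ − η)/(θ − η^{q^j}) )^{W_n}, where the exponents q^{i−n} of η are interpreted via η^{q^N} = η. (This expresses the coefficients D_n^{σ^j} of the exponential function exp_{(j)} of the σ^j-twisted Drinfeld module Ψ^{(j)} in terms of the coefficients D_n of exp_{(0)}.) -/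
/-- The coefficients of the exponential of the `σ^j`-twisted
Drinfeld module in terms of those of `exp_{(0)}`: for all `n, j ≥ 0`,
`D_n(η^{q^j}) = D_n(η) · ∏_{i<j} ((θ-η^{q^{i-n}})/(θ-η^{q^i}))^{q^n} · ((θ-η)/(θ-η^{q^j}))^{W_n}`. -/
theorem twisted_exponential_coefficients
    (p q N : ℕ) (hp : Nat.Prime p) (hq : ∃ e : ℕ, 0 < e ∧ q = p ^ e)
    (hN : 2 ≤ N)
    (F : Type*) [Field F] [CharP F p]
    (θ η : F) (hη : η ≠ 0) (hper : η ^ q ^ N = η)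
    (hθη : ∀ a b : ℕ, θ ^ q ^ a ≠ η ^ q ^ b)
    (hθ : ∀ m : ℕ, 1 ≤ m → θ ^ q ^ m ≠ θ)
    (W : ℕ → ℕ) (hW : ∀ i, W i = (q ^ i - 1) / (q - 1))
    -- the η-powers with possibly negative exponent index, via η^{q^N} = η
    (ηe : ℤ → F) (hηe : ∀ c : ℤ, ηe c = η ^ q ^ ((c % (N : ℤ)).toNat))
    -- the coefficients D_n, parameterized by the element substituted for η
    (Dp : F → ℕ → F) (hDp0 : ∀ e : F, Dp e 0 = 1)
    (hDprec : ∀ (e : F) (i : ℕ), Dp e (i + 1)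
      = Dp e i ^ q * (θ - θ ^ q ^ (i + 1)) / ((θ ^ q ^ (i + 1) - e) * (θ - e))) :
    ∀ n j : ℕ,
      Dp (η ^ q ^ j) n
        = Dp η n
          * (∏ i ∈ Finset.range j,
              ((θ - ηe ((i : ℤ) - (n : ℤ))) / (θ - η ^ q ^ i)) ^ q ^ n)
          * ((θ - η) / (θ - η ^ q ^ j)) ^ W n := by
  haveI : Fact p.Prime := ⟨hp⟩
  obtain ⟨e, he0, hqe⟩ := hq
  have hq2 : 2 ≤ q := by
    have : 1 < p ^ e := Nat.one_lt_pow he0.ne' hp.one_lt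
    omega
  have hN0 : 0 < N := by omega
  have hNz : (N : ℤ) ≠ 0 := by exact_mod_cast hN0.ne'
  -- Frobenius
  have frob : ∀ (x y : F) (k : ℕ), (x - y) ^ q ^ k = x ^ q ^ k - y ^ q ^ k := by
    intro x y k
    rw [hqe, ← pow_mul, sub_pow_char_pow]
  -- periodicity
  have haddN : ∀ a : ℕ, η ^ q ^ (a + N) = η ^ q ^ a := by
    intro a
    rw [pow_add, mul_comm, pow_mul, hper]
  have hmod : ∀ k : ℕ, η ^ q ^ k = η ^ q ^ (k % N) := by
    intro k
    induction k using Nat.strong_induction_on with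
    | _ k ih =>
      by_cases hk : k < N
      · rw [Nat.mod_eq_of_lt hk]
      · push_neg at hk
        have h1 : k % N = (k - N) % N := Nat.mod_eq_sub_mod hk
        have h2 : k = (k - N) + N := by omega
        rw [h1]
        conv_lhs => rw [h2]
        rw [haddN]
        exact ih (k - N) (by omega)
  have hηe_eq : ∀ (m : ℕ) (c : ℤ), (m : ℤ) % (N : ℤ) = c % N → ηe c = η ^ q ^ m := by
    intro m c h
    rw [hηe, ← h]
    rw [show ((m : ℤ) % (N : ℤ)) = ((m % N : ℕ) : ℤ) by push_cast; ring,
      Int.toNat_natCast]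
    exact (hmod m).symm
  have ηe_nat : ∀ m : ℕ, ηe (m : ℤ) = η ^ q ^ m := fun m => hηe_eq m m rfl
  have ηe_zero : ηe 0 = η := by simpa using ηe_nat 0
  have ηe_pow : ∀ (c : ℤ) (k : ℕ), ηe c ^ q ^ k = ηe (c + k) := by
    intro c k
    have hnn : 0 ≤ c % (N : ℤ) := Int.emod_nonneg c hNz
    have ht : ((c % (N : ℤ)).toNat : ℤ) = c % N := Int.toNat_of_nonneg hnn
    rw [hηe c, ← pow_mul, ← pow_add]
    refine (hηe_eq ((c % (N : ℤ)).toNat + k) (c + k) ?_).symm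
    push_cast
    rw [ht, Int.emod_add_emod]
  -- nonvanishing
  have hθsub : ∀ b : ℕ, θ - η ^ q ^ b ≠ 0 := by
    intro b
    have := hθη 0 b
    rw [pow_zero, pow_one] at this
    exact sub_ne_zero_of_ne this
  have hθqsub : ∀ a b : ℕ, θ ^ q ^ a - η ^ q ^ b ≠ 0 := fun a b =>
    sub_ne_zero_of_ne (hθη a b)
  have hθηe : ∀ c : ℤ, θ - ηe c ≠ 0 := by
    intro c; rw [hηe]; exact hθsub _
  -- W facts
  have hW0 : W 0 = 0 := by rw [hW]; simp
  have hWsucc : ∀ n : ℕ, W (n + 1) = q * W n + 1 := by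
    intro n
    obtain ⟨k, hk⟩ : (q - 1) ∣ q ^ n - 1 := by
      simpa using Nat.sub_dvd_pow_sub_pow q 1 n
    have h1 : 0 < q - 1 := by omega
    have hx : 1 ≤ q ^ n := Nat.one_le_pow _ _ (by omega)
    have hx1 : 1 ≤ q ^ (n + 1) := Nat.one_le_pow _ _ (by omega)
    have key : q ^ (n + 1) - 1 = (q - 1) * (q * k + 1) := by
      zify [hx, hx1, show 1 ≤ q by omega] at hk ⊢
      linear_combination (q : ℤ) * hk
    rw [hW, hW, hk, Nat.mul_div_cancel_left _ h1, key, Nat.mul_div_cancel_left _ h1]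
  -- telescoping product
  have T : ∀ (c : ℤ) (j : ℕ),
      ∏ i ∈ Finset.range j, ((θ - ηe ((i : ℤ) + c)) / (θ - ηe ((i : ℤ) + 1 + c)))
        = (θ - ηe c) / (θ - ηe ((j : ℤ) + c)) := by
    intro c j
    induction j with
    | zero => simp [div_self (hθηe c)]
    | succ m ih =>
      rw [Finset.prod_range_succ, ih]
      have h1 := hθηe ((m : ℤ) + c)
      have h2 := hθηe ((m : ℤ) + 1 + c)
      have h3 := hθηe c
      push_cast
      field_simp
  -- main induction
  intro n j
  induction n with
  | zero =>
    simp only [hDp0, hW0, pow_zero, pow_one, one_mul, mul_one, Nat.cast_zero, sub_zero]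
    symm
    refine Finset.prod_eq_one fun i _ => ?_
    rw [ηe_nat]
    exact div_self (hθsub i)
  | succ n ih =>
    rw [hDprec, hDprec, ih]
    set D := Dp η n with hD
    set A := θ - θ ^ q ^ (n + 1) with hA
    set X := θ ^ q ^ (n + 1) - η with hX
    set Y := θ ^ q ^ (n + 1) - η ^ q ^ j with hY
    set u := θ - η with hu
    set v := θ - η ^ q ^ j with hv
    set P := ∏ i ∈ Finset.range j, ((θ - ηe ((i : ℤ) - (n : ℤ))) / (θ - η ^ q ^ i)) ^ q ^ n
      with hP
    set P' := ∏ i ∈ Finset.range j,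
        ((θ - ηe ((i : ℤ) - ((n : ℕ) + 1 : ℕ))) / (θ - η ^ q ^ i)) ^ q ^ (n + 1) with hP'
    -- P ^ q as a product
    have hPq : P ^ q = ∏ i ∈ Finset.range j,
        ((θ - ηe ((i : ℤ) - (n : ℤ))) / (θ - η ^ q ^ i)) ^ q ^ (n + 1) := by
      rw [hP, ← Finset.prod_pow]
      refine Finset.prod_congr rfl fun i _ => ?_
      rw [← pow_mul, pow_succ]
    -- the telescoping correction
    have hG : P' = P ^ q * ((X / Y) : F) := by
      have hT := T (-(n : ℤ) - 1) j
      have hXY : (∏ i ∈ Finset.range j,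
          ((θ - ηe ((i : ℤ) + (-(n : ℤ) - 1))) / (θ - ηe ((i : ℤ) + 1 + (-(n : ℤ) - 1)))))
            ^ q ^ (n + 1) = X / Y := by
        rw [hT, div_pow, frob, frob, ηe_pow, ηe_pow]
        rw [show (-(n : ℤ) - 1 + ((n : ℕ) + 1 : ℕ) : ℤ) = 0 by push_cast; ring, ηe_zero]
        rw [show ((j : ℤ) + (-(n : ℤ) - 1) + ((n : ℕ) + 1 : ℕ) : ℤ) = (j : ℤ) by
          push_cast; ring, ηe_nat]
      rw [← hXY, hPq, ← Finset.prod_pow, ← Finset.prod_mul_distrib]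
      refine Finset.prod_congr rfl fun i _ => ?_
      rw [← mul_pow]
      congr 1
      rw [show ((i : ℤ) + (-(n : ℤ) - 1)) = (i : ℤ) - ((n : ℕ) + 1 : ℕ) by push_cast; ring,
        show ((i : ℤ) + 1 + (-(n : ℤ) - 1)) = (i : ℤ) - (n : ℤ) by ring]
      rw [div_mul_div_comm, mul_comm (θ - ηe ((i : ℤ) - (n : ℤ)))]
      rw [mul_div_mul_right _ _ (hθηe ((i : ℤ) - (n : ℤ)))]
    have hQ : ((u / v) : F) ^ W (n + 1) = ((u / v) ^ W n) ^ q * (u / v) := by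
      rw [hWsucc, ← pow_mul, pow_succ, mul_comm (W n) q]
    -- now pure field algebra
    rw [hG, hQ]
    have hXne : X ≠ 0 := by
      rw [hX]
      simpa using hθqsub (n + 1) 0
    have hYne : Y ≠ 0 := by rw [hY]; exact hθqsub (n + 1) j
    have hune : u ≠ 0 := by
      rw [hu]
      simpa using hθsub 0
    have hvne : v ≠ 0 := by rw [hv]; exact hθsub j
    field_simp
    ring
end
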